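/- arXiv:2402.19074 — 4 statements merged into one kernel-verified Lean document; each statement's English description precedes it below -/
import Mathlib

section
/- Let G be a compact metrizable topological group, T : G → G a continuous group homomorphism, and μ, ν ∈ M(T). If h_μ(T) < ∞, then h_ν(T) ≤ h_{μ*ν}(T); likewise, if h_ν(T) < ∞, then h_μ(T) ≤ h_{μ*ν}(T). -/
open MeasureTheory Filter
open scoped ENNReal

/-- The Shannon entropy of a finite-valued measurable observable (i.e. of the finite
measurable partition it induces) with respect to a measure `μ`. -/
noncomputable def partitionEntropy {X : Type*} [MeasurableSpace X] (μ : Measure X)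
    {ι : Type*} [Fintype ι] (f : X → ι) : ℝ :=
  ∑ i, Real.negMulLog (μ (f ⁻¹' {i})).toReal

/-- The entropy of the join `⋁_{i=0}^{n-1} T⁻ⁱ α` of the partition induced by `f`
along the first `n` iterates of `T`. -/
noncomputable def processEntropy {X : Type*} [MeasurableSpace X] (μ : Measure X)
    (T : X → X) {ι : Type*} [Fintype ι] (f : X → ι) (n : ℕ) : ℝ :=
  partitionEntropy μ (fun x => fun i : Fin n => f (T^[(i : ℕ)] x))

/-- The Kolmogorov–Sinai (measure-theoretic) entropy of `T` with respect to `μ`: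
the supremum over all finite measurable partitions (encoded as measurable maps into
`Fin k`) of the asymptotic entropy rate of the induced process. -/
noncomputable def ksEntropy {X : Type*} [MeasurableSpace X] (μ : Measure X)
    (T : X → X) : ℝ≥0∞ :=
  ⨆ (k : ℕ) (f : X → Fin k) (_ : Measurable f),
    Filter.limsup (fun n : ℕ => ENNReal.ofReal (processEntropy μ T f n / n)) Filter.atTop

/-!
The shear `(x, y) ↦ (x, x y)` commutes with `T × T` because `T` is a homomorphism, and it carries
`μ × ν` to a joining of `μ` with `μ * ν`; likewise `(x, y) ↦ (y, x y)` gives a joining of `ν` with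
`μ * ν`. Entropy is superadditive on products and subadditive on joinings, so
`h_μ + h_ν ≤ h_{μ×ν} ≤ h_μ + h_{μ*ν}` and `h_μ` cancels when it is finite.

Subadditivity on a joining `m` of `(Y, T₁)` and `(Z, T₂)`: measurable rectangles generate the
product σ-algebra, so a finite partition `P` of `Y × Z` agrees, off a set of small measure `e`,
with a function of `R = (u, v)` for finite partitions `u` of `Y` and `v` of `Z`. Then
`h(P) ≤ h(R) + H(P | R) ≤ h(u) + h(v) + H(P | ψ ∘ R)`, and Fano's inequality bounds the last
term by a quantity that tends to `0` with `e`.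
-/

open Function Real Topology
open scoped symmDiff

universe u v

theorem sum_mul_log_le_sum_mul_log {ι : Type*} (s : Finset ι) {a b : ι → ℝ}
    (ha : ∀ t ∈ s, 0 ≤ a t) (hb : ∀ t ∈ s, 0 ≤ b t) (hab : ∀ t ∈ s, a t ≠ 0 → b t ≠ 0)
    (hsum : ∑ t ∈ s, b t ≤ ∑ t ∈ s, a t) :
    ∑ t ∈ s, a t * log (b t) ≤ ∑ t ∈ s, a t * log (a t) := by
  have key : ∀ t ∈ s, a t * log (b t) - a t * log (a t) ≤ b t - a t := by
    intro t ht
    rcases (ha t ht).eq_or_lt with h0 | h0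
    · simp [← h0, hb t ht]
    · have hbt : 0 < b t := (hb t ht).lt_of_ne' (hab t ht h0.ne')
      calc a t * log (b t) - a t * log (a t) = a t * log (b t / a t) := by
            rw [log_div hbt.ne' h0.ne']; ring
        _ ≤ a t * (b t / a t - 1) := by gcongr; exact log_le_sub_one_of_pos (div_pos hbt h0)
        _ = b t - a t := by field_simp
  have := Finset.sum_le_sum key
  simp only [Finset.sum_sub_distrib] at this
  linarith

theorem negMulLog_sum_le_sum_negMulLog {ι : Type*} (s : Finset ι) {a : ι → ℝ}
    (ha : ∀ t ∈ s, 0 ≤ a t) : negMulLog (∑ t ∈ s, a t) ≤ ∑ t ∈ s, negMulLog (a t) := by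
  rw [negMulLog, neg_mul, Finset.sum_mul, ← Finset.sum_neg_distrib]
  refine Finset.sum_le_sum fun t ht => ?_
  rcases (ha t ht).eq_or_lt with h0 | h0
  · simp [← h0]
  · rw [negMulLog, neg_mul, neg_le_neg_iff]
    gcongr
    exact Finset.single_le_sum ha ht

def MeasurableFibers {X ι : Type*} [MeasurableSpace X] (f : X → ι) : Prop :=
  ∀ i, MeasurableSet (f ⁻¹' {i})

namespace MeasurableFibers

variable {X Y ι κ : Type*} [MeasurableSpace X] [MeasurableSpace Y] {f : X → ι} {g : X → κ}

theorem comp [Countable ι] (hf : MeasurableFibers f) (φ : ι → κ) : MeasurableFibers (φ ∘ f) :=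
  fun j => by
    rw [Set.preimage_comp, ← Set.biUnion_preimage_singleton]
    exact .biUnion (Set.to_countable _) fun i _ => hf i

theorem prodMk (hf : MeasurableFibers f) (hg : MeasurableFibers g) :
    MeasurableFibers fun x => (f x, g x) := fun p => by
  rw [← Set.singleton_prod_singleton, Set.mk_preimage_prod]
  exact (hf p.1).inter (hg p.2)

theorem comp_measurable (hf : MeasurableFibers f) {p : Y → X} (hp : Measurable p) :
    MeasurableFibers (f ∘ p) := fun i => hp (hf i)

theorem measurable [MeasurableSpace ι] [Countable ι] (hf : MeasurableFibers f) : Measurable f :=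
  measurable_to_countable' hf

end MeasurableFibers

theorem Measurable.measurableFibers {X ι : Type*} [MeasurableSpace X] [MeasurableSpace ι]
    [MeasurableSingletonClass ι] {f : X → ι} (hf : Measurable f) : MeasurableFibers f :=
  fun i => hf (measurableSet_singleton i)

section PartitionEntropy

variable {X : Type*} [MeasurableSpace X] {μ : Measure X} {ι κ : Type*}

theorem measureReal_preimage_singleton_le_comp [IsFiniteMeasure μ] (f : X → ι) (φ : ι → κ)
    (i : ι) : μ.real (f ⁻¹' {i}) ≤ μ.real ((φ ∘ f) ⁻¹' {φ i}) :=
  measureReal_mono fun x hx => by simp_all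

variable [Fintype ι]

theorem partitionEntropy_eq_sum_negMulLog_measureReal (f : X → ι) :
    partitionEntropy μ f = ∑ i, negMulLog (μ.real (f ⁻¹' {i})) := rfl

theorem partitionEntropy_comp_of_injective [Fintype κ] (f : X → ι) {φ : ι → κ}
    (hφ : Injective φ) : partitionEntropy μ (φ ∘ f) = partitionEntropy μ f := by
  classical
  have hzero : ∀ j ∈ Finset.univ, j ∉ Finset.univ.image φ →
      negMulLog (μ.real ((φ ∘ f) ⁻¹' {j})) = 0 := fun j _ hj => by
    have : (φ ∘ f) ⁻¹' {j} = ∅ := Set.eq_empty_of_forall_notMem fun x hx =>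
      hj (Finset.mem_image.2 ⟨f x, Finset.mem_univ _, hx⟩)
    simp [this]
  rw [partitionEntropy_eq_sum_negMulLog_measureReal,
    ← Finset.sum_subset (Finset.subset_univ _) hzero, Finset.sum_image fun _ _ _ _ h => hφ h]
  refine Finset.sum_congr rfl fun i _ => ?_
  rw [Set.preimage_comp, ← Set.image_singleton, hφ.preimage_image]
  rfl

variable [IsProbabilityMeasure μ]

theorem partitionEntropy_nonneg (f : X → ι) : 0 ≤ partitionEntropy μ f :=
  Finset.sum_nonneg fun _ _ => negMulLog_nonneg measureReal_nonneg measureReal_le_one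

theorem sum_measureReal_preimage_singleton_eq_one {f : X → ι} (hf : MeasurableFibers f) :
    ∑ i, μ.real (f ⁻¹' {i}) = 1 := by
  rw [sum_measureReal_preimage_singleton _ fun i _ => hf i, Finset.coe_univ, Set.preimage_univ,
    probReal_univ]

theorem measureReal_comp_preimage_singleton [DecidableEq κ] {f : X → ι}
    (hf : MeasurableFibers f) (φ : ι → κ) (j : κ) :
    μ.real ((φ ∘ f) ⁻¹' {j}) = ∑ i with φ i = j, μ.real (f ⁻¹' {i}) := by
  rw [sum_measureReal_preimage_singleton _ fun i _ => hf i]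
  congr 1
  ext x
  simp

theorem sum_measureReal_prodMk_preimage_singleton {f : X → ι} {g : X → κ}
    (hf : MeasurableFibers f) (hg : MeasurableFibers g) (r : κ) :
    ∑ i, μ.real ((fun x => (f x, g x)) ⁻¹' {(i, r)}) = μ.real (g ⁻¹' {r}) := by
  have h := sum_measureReal_preimage_singleton (μ := μ) (Finset.univ ×ˢ {r})
    fun t _ => hf.prodMk hg t
  rw [Finset.sum_product, Finset.sum_comm, Finset.sum_singleton] at h
  rw [h]
  congr 1
  ext x
  simp [eq_comm]

variable [Fintype κ]

theorem sum_measureReal_preimage_singleton_mul_comp {f : X → ι} (hf : MeasurableFibers f)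
    (φ : ι → κ) (F : κ → ℝ) :
    ∑ i, μ.real (f ⁻¹' {i}) * F (φ i) = ∑ j, μ.real ((φ ∘ f) ⁻¹' {j}) * F j := by
  classical
  rw [← Finset.sum_fiberwise Finset.univ φ]
  refine Finset.sum_congr rfl fun j _ => ?_
  rw [measureReal_comp_preimage_singleton hf, Finset.sum_mul]
  exact Finset.sum_congr rfl fun i hi => by rw [(Finset.mem_filter.1 hi).2]

theorem partitionEntropy_comp_le {f : X → ι} (hf : MeasurableFibers f) (φ : ι → κ) :
    partitionEntropy μ (φ ∘ f) ≤ partitionEntropy μ f := by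
  classical
  simp only [partitionEntropy_eq_sum_negMulLog_measureReal,
    measureReal_comp_preimage_singleton hf]
  rw [← Finset.sum_fiberwise Finset.univ φ (fun i => negMulLog (μ.real (f ⁻¹' {i})))]
  exact Finset.sum_le_sum fun j _ =>
    negMulLog_sum_le_sum_negMulLog _ fun _ _ => measureReal_nonneg

end PartitionEntropy

/-! ### Conditional entropy -/

noncomputable def condPartitionEntropy {X : Type*} [MeasurableSpace X] (μ : Measure X)
    {ι κ : Type*} [Fintype ι] [Fintype κ] (f : X → ι) (g : X → κ) : ℝ :=
  partitionEntropy μ (fun x => (f x, g x)) - partitionEntropy μ g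

section CondPartitionEntropy

variable {X : Type*} [MeasurableSpace X] {μ : Measure X} {ι κ γ : Type*}
  [Fintype ι] [Fintype κ] [Fintype γ]

theorem partitionEntropy_eq_neg_sum_mul_log (f : X → ι) :
    partitionEntropy μ f = -∑ i, μ.real (f ⁻¹' {i}) * log (μ.real (f ⁻¹' {i})) := by
  simp [partitionEntropy_eq_sum_negMulLog_measureReal, negMulLog]

theorem condPartitionEntropy_eq_add_of_comp (f : X → ι) (g : X → κ) (ψ : ι × κ → γ) :
    condPartitionEntropy μ f g = condPartitionEntropy μ f (fun x => (g x, ψ (f x, g x)))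
      + condPartitionEntropy μ (fun x => ψ (f x, g x)) g := by
  have hfgh : partitionEntropy μ (fun x => (f x, g x, ψ (f x, g x)))
      = partitionEntropy μ (fun x => (f x, g x)) :=
    partitionEntropy_comp_of_injective (fun x => (f x, g x)) (φ := fun t => (t.1, t.2, ψ t))
      fun s t h => by simp only [Prod.mk.injEq] at h; exact Prod.ext h.1 h.2.1
  have hswap : partitionEntropy μ (fun x => (ψ (f x, g x), g x))
      = partitionEntropy μ (fun x => (g x, ψ (f x, g x))) :=
    partitionEntropy_comp_of_injective (fun x => (g x, ψ (f x, g x))) Prod.swap_injective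
  rw [condPartitionEntropy, condPartitionEntropy, condPartitionEntropy, hfgh, hswap]
  ring

variable [IsProbabilityMeasure μ]

theorem condPartitionEntropy_le_sum_mul_neg_log {f : X → ι} {g : X → κ}
    (hf : MeasurableFibers f) (hg : MeasurableFibers g) (w : ι × κ → ℝ) (hw : ∀ t, 0 ≤ w t)
    (hw_sum : ∀ r, ∑ i, w (i, r) ≤ 1)
    (hw_pos : ∀ t, μ.real ((fun x => (f x, g x)) ⁻¹' {t}) ≠ 0 → w t ≠ 0) :
    condPartitionEntropy μ f g
      ≤ ∑ t, μ.real ((fun x => (f x, g x)) ⁻¹' {t}) * -log (w t) := by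
  set F : X → ι × κ := fun x => (f x, g x)
  have hF : MeasurableFibers F := hf.prodMk hg
  set a : ι × κ → ℝ := fun t => μ.real (F ⁻¹' {t})
  -- Gibbs' inequality for the law `a` of `(f, g)` against the weights `w (i, r) * μ(g = r)`
  have hga : ∀ t, a t ≠ 0 → μ.real (g ⁻¹' {t.2}) ≠ 0 := fun t ht h => ht <|
    le_antisymm (h ▸ measureReal_preimage_singleton_le_comp F Prod.snd t) measureReal_nonneg
  have hsum : ∑ t, w t * μ.real (g ⁻¹' {t.2}) ≤ ∑ t, a t := by
    rw [sum_measureReal_preimage_singleton_eq_one hF,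
      ← sum_measureReal_preimage_singleton_eq_one (μ := μ) hg, Fintype.sum_prod_type,
      Finset.sum_comm]
    refine Finset.sum_le_sum fun r _ => ?_
    simp only [← Finset.sum_mul]
    exact mul_le_of_le_one_left measureReal_nonneg (hw_sum r)
  have gibbs := sum_mul_log_le_sum_mul_log Finset.univ (fun t _ => measureReal_nonneg)
    (fun t _ => mul_nonneg (hw t) measureReal_nonneg)
    (fun t _ ht => mul_ne_zero (hw_pos t ht) (hga t ht)) hsum
  have hsplit : ∑ t, a t * log (w t * μ.real (g ⁻¹' {t.2}))
      = ∑ t, a t * log (w t) + ∑ t, a t * log (μ.real (g ⁻¹' {t.2})) := by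
    rw [← Finset.sum_add_distrib]
    refine Finset.sum_congr rfl fun t _ => ?_
    by_cases ht : a t = 0
    · simp [ht]
    · rw [log_mul (hw_pos t ht) (hga t ht), mul_add]
  have hg_sum : ∑ t, a t * log (μ.real (g ⁻¹' {t.2})) = -partitionEntropy μ g := by
    rw [partitionEntropy_eq_neg_sum_mul_log, neg_neg]
    exact sum_measureReal_preimage_singleton_mul_comp (μ := μ) hF Prod.snd
      fun r => log (μ.real (g ⁻¹' {r}))
  have hF_sum : ∑ t, a t * log (a t) = -partitionEntropy μ F := by
    rw [partitionEntropy_eq_neg_sum_mul_log, neg_neg]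
  simp only [mul_neg, Finset.sum_neg_distrib]
  rw [condPartitionEntropy]
  linarith

theorem condPartitionEntropy_le_partitionEntropy {f : X → ι} {g : X → κ}
    (hf : MeasurableFibers f) (hg : MeasurableFibers g) :
    condPartitionEntropy μ f g ≤ partitionEntropy μ f := by
  refine (condPartitionEntropy_le_sum_mul_neg_log hf hg (fun t => μ.real (f ⁻¹' {t.1}))
    (fun _ => measureReal_nonneg) (fun _ => (sum_measureReal_preimage_singleton_eq_one hf).le)
    fun t ht h => ht <| le_antisymm ?_ measureReal_nonneg).trans_eq ?_
  · exact h ▸ measureReal_preimage_singleton_le_comp (fun x => (f x, g x)) Prod.fst t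
  · simp only [partitionEntropy_eq_neg_sum_mul_log, mul_neg, Finset.sum_neg_distrib, neg_inj]
    exact sum_measureReal_preimage_singleton_mul_comp (μ := μ) (hf.prodMk hg) Prod.fst
      fun i => log (μ.real (f ⁻¹' {i}))

theorem condPartitionEntropy_le_comp {f : X → ι} {g : X → κ} (hf : MeasurableFibers f)
    (hg : MeasurableFibers g) (φ : κ → γ) :
    condPartitionEntropy μ f g ≤ condPartitionEntropy μ f (φ ∘ g) := by
  set F : X → ι × κ := fun x => (f x, g x)
  set Fφ : X → ι × γ := fun x => (f x, (φ ∘ g) x)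
  have hF : MeasurableFibers F := hf.prodMk hg
  have hne : ∀ t, μ.real (F ⁻¹' {t}) ≠ 0 → μ.real (Fφ ⁻¹' {(t.1, φ t.2)}) ≠ 0 ∧
      μ.real ((φ ∘ g) ⁻¹' {φ t.2}) ≠ 0 := fun t ht =>
    have hpos := measureReal_nonneg.lt_of_ne' ht
    ⟨(hpos.trans_le (measureReal_preimage_singleton_le_comp F (fun t => (t.1, φ t.2)) t)).ne',
      (hpos.trans_le (measureReal_preimage_singleton_le_comp F (fun t => φ t.2) t)).ne'⟩
  -- the weights are the conditional law of `f` given `φ ∘ g`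
  refine (condPartitionEntropy_le_sum_mul_neg_log hf hg
    (fun t => μ.real (Fφ ⁻¹' {(t.1, φ t.2)}) / μ.real ((φ ∘ g) ⁻¹' {φ t.2}))
    (fun _ => div_nonneg measureReal_nonneg measureReal_nonneg) (fun r => ?_)
    fun t ht => div_ne_zero (hne t ht).1 (hne t ht).2).trans_eq ?_
  · simp only [← Finset.sum_div]
    rw [show ∑ i, μ.real (Fφ ⁻¹' {(i, φ r)}) = μ.real ((φ ∘ g) ⁻¹' {φ r}) from
      sum_measureReal_prodMk_preimage_singleton hf (hg.comp φ) (φ r)]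
    exact div_self_le_one _
  · have hsplit : ∀ t, μ.real (F ⁻¹' {t}) * -log (μ.real (Fφ ⁻¹' {(t.1, φ t.2)})
          / μ.real ((φ ∘ g) ⁻¹' {φ t.2}))
        = -(μ.real (F ⁻¹' {t}) * log (μ.real (Fφ ⁻¹' {(t.1, φ t.2)})))
          + μ.real (F ⁻¹' {t}) * log (μ.real ((φ ∘ g) ⁻¹' {φ t.2})) := fun t => by
      by_cases ht : μ.real (F ⁻¹' {t}) = 0
      · simp [ht]
      · rw [log_div (hne t ht).1 (hne t ht).2]; ring
    have hFφ : ∑ t, μ.real (F ⁻¹' {t}) * log (μ.real (Fφ ⁻¹' {(t.1, φ t.2)}))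
        = ∑ s, μ.real (Fφ ⁻¹' {s}) * log (μ.real (Fφ ⁻¹' {s})) :=
      sum_measureReal_preimage_singleton_mul_comp (μ := μ) hF (fun t => (t.1, φ t.2))
        fun s => log (μ.real (Fφ ⁻¹' {s}))
    have hφg : ∑ t, μ.real (F ⁻¹' {t}) * log (μ.real ((φ ∘ g) ⁻¹' {φ t.2}))
        = ∑ c, μ.real ((φ ∘ g) ⁻¹' {c}) * log (μ.real ((φ ∘ g) ⁻¹' {c})) :=
      sum_measureReal_preimage_singleton_mul_comp (μ := μ) hF (fun t => φ t.2)
        fun c => log (μ.real ((φ ∘ g) ⁻¹' {c}))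
    rw [Finset.sum_congr rfl fun t _ => hsplit t, Finset.sum_add_distrib, Finset.sum_neg_distrib,
      hFφ, hφg, condPartitionEntropy, partitionEntropy_eq_neg_sum_mul_log,
      partitionEntropy_eq_neg_sum_mul_log]
    ring

theorem partitionEntropy_bool {E : X → Bool} (hE : MeasurableFibers E) :
    partitionEntropy μ E = binEntropy (μ.real (E ⁻¹' {true})) := by
  rw [partitionEntropy_eq_sum_negMulLog_measureReal, Fintype.sum_bool,
    binEntropy_eq_negMulLog_add_negMulLog_one_sub,
    ← sum_measureReal_preimage_singleton_eq_one (μ := μ) hE, Fintype.sum_bool, add_sub_cancel_left]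

end CondPartitionEntropy

theorem sum_ite_eq_zero_inv_card_sub_one_le {ι : Type*} [Fintype ι] [DecidableEq ι] (q : ι) :
    ∑ i, (if i = q then (0 : ℝ) else ((Fintype.card ι : ℝ) - 1)⁻¹) ≤ 1 := by
  set c := ((Fintype.card ι : ℝ) - 1)⁻¹
  calc ∑ i, (if i = q then 0 else c) = ∑ i, (c - if i = q then c else 0) :=
        Finset.sum_congr rfl fun i _ => by split_ifs <;> ring
    _ = ((Fintype.card ι : ℝ) - 1) * c := by
        simp only [Finset.sum_sub_distrib, Finset.sum_ite_eq', Finset.mem_univ, if_true,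
          Finset.sum_const, Finset.card_univ, nsmul_eq_mul]
        ring
    _ ≤ 1 := mul_inv_le_one

section Fano

variable {X : Type*} [MeasurableSpace X] {μ : Measure X} [IsProbabilityMeasure μ] {ι : Type*}
  [Fintype ι] [DecidableEq ι] {f g : X → ι}

theorem condPartitionEntropy_prodMk_decide_ne_le (hf : MeasurableFibers f)
    (hg : MeasurableFibers g) :
    condPartitionEntropy μ f (fun x => (g x, decide (f x ≠ g x)))
      ≤ μ.real {x | f x ≠ g x} * log (Fintype.card ι - 1) := by
  set K : ℝ := (Fintype.card ι : ℝ)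
  set E : X → Bool := fun x => decide (f x ≠ g x)
  have hE : MeasurableFibers E := (hf.prodMk hg).comp fun t : ι × ι => decide (t.1 ≠ t.2)
  set F : X → ι × ι × Bool := fun x => (f x, g x, E x)
  -- on the error event `E`, `w` spreads `f` uniformly over the `K - 1` values other than `g`
  set w : ι × ι × Bool → ℝ := fun t =>
    if t.2.2 then (if t.1 = t.2.1 then 0 else (K - 1)⁻¹) else (if t.1 = t.2.1 then 1 else 0)
  have hK : ∀ i : ι, 1 ≤ K := fun i => Nat.one_le_cast.2 (Fintype.card_pos_iff.2 ⟨i⟩)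
  have hfiber : ∀ t, μ.real (F ⁻¹' {t}) ≠ 0 → t.2.2 = decide (t.1 ≠ t.2.1) := fun t ht => by
    obtain ⟨x, hx⟩ := nonempty_of_measureReal_ne_zero ht
    simp only [Set.mem_preimage, Set.mem_singleton_iff, Prod.ext_iff, F] at hx
    rw [← hx.1, ← hx.2.1, ← hx.2.2]
  have hK1 : ∀ t : ι × ι × Bool, t.1 ≠ t.2.1 → K - 1 ≠ 0 := fun t h => by
    have : 1 < Fintype.card ι := Fintype.one_lt_card_iff.2 ⟨t.1, t.2.1, h⟩
    linarith [Nat.one_lt_cast (α := ℝ).2 this]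
  have hlog : ∀ t, μ.real (F ⁻¹' {t}) * -log (w t)
      = μ.real (F ⁻¹' {t}) * (if t.2.2 then log (K - 1) else 0) := fun t => by
    by_cases ht : μ.real (F ⁻¹' {t}) = 0
    · simp [ht]
    · by_cases hit : t.1 = t.2.1 <;> simp [w, hfiber t ht, hit]
  refine (condPartitionEntropy_le_sum_mul_neg_log hf (hg.prodMk hE) w (fun t => ?_)
    (fun r => ?_) (fun t ht => ?_)).trans_eq ?_
  · have := hK t.1
    simp only [w]
    split_ifs <;> positivity
  · rcases r with ⟨q, _ | _⟩
    · simp [w]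
    · simpa only [w, if_true] using sum_ite_eq_zero_inv_card_sub_one_le q
  · have := hfiber t ht
    by_cases hit : t.1 = t.2.1
    · simp_all [w]
    · simp_all [w, hK1 t hit]
  · rw [Finset.sum_congr rfl fun t _ => hlog t,
      sum_measureReal_preimage_singleton_mul_comp (μ := μ) (hf.prodMk (hg.prodMk hE))
        (fun t => t.2.2) fun b => if b then log (K - 1) else 0,
      Fintype.sum_bool]
    simp only [if_true, Bool.false_eq_true, if_false, mul_zero, add_zero]
    rw [show ((fun t : ι × ι × Bool => t.2.2) ∘ F) ⁻¹' {true} = {x | f x ≠ g x} by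
      ext x; simp [F, E]]

theorem condPartitionEntropy_le_qaryEntropy (hf : MeasurableFibers f)
    (hg : MeasurableFibers g) :
    condPartitionEntropy μ f g ≤ qaryEntropy (Fintype.card ι) (μ.real {x | f x ≠ g x}) := by
  have hE : MeasurableFibers fun x => decide (f x ≠ g x) :=
    (hf.prodMk hg).comp fun t : ι × ι => decide (t.1 ≠ t.2)
  have hbin : partitionEntropy μ (fun x => decide (f x ≠ g x))
      = binEntropy (μ.real {x | f x ≠ g x}) := by
    rw [partitionEntropy_bool hE, show (fun x => decide (f x ≠ g x)) ⁻¹' {true}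
      = {x | f x ≠ g x} by ext x; simp]
  rw [condPartitionEntropy_eq_add_of_comp f g fun t => decide (t.1 ≠ t.2), qaryEntropy, ← hbin]
  push_cast
  exact add_le_add (condPartitionEntropy_prodMk_decide_ne_le hf hg)
    (condPartitionEntropy_le_partitionEntropy hE hg)

end Fano

section Reindexing

variable {X Y : Type*} [MeasurableSpace X] [MeasurableSpace Y] {μ : Measure X} {ν : Measure Y}
  {ι κ ι' κ' : Type*} [Fintype ι] [Fintype κ] [Fintype ι'] [Fintype κ']

theorem condPartitionEntropy_comp_of_injective (f : X → ι) (g : X → κ) {φ : ι → ι'}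
    {ψ : κ → κ'} (hφ : Injective φ) (hψ : Injective ψ) :
    condPartitionEntropy μ (φ ∘ f) (ψ ∘ g) = condPartitionEntropy μ f g := by
  have h := partitionEntropy_comp_of_injective (μ := μ) (fun x => (f x, g x)) (hφ.prodMap hψ)
  rw [condPartitionEntropy, condPartitionEntropy, partitionEntropy_comp_of_injective g hψ, ← h]
  rfl

theorem partitionEntropy_comp_measurePreserving {p : X → Y} (hp : MeasurePreserving p μ ν)
    {f : Y → ι} (hf : MeasurableFibers f) : partitionEntropy μ (f ∘ p) = partitionEntropy ν f := by
  simp only [partitionEntropy_eq_sum_negMulLog_measureReal, Set.preimage_comp,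
    hp.measureReal_preimage (hf _).nullMeasurableSet]

theorem condPartitionEntropy_comp_measurePreserving {p : X → Y} (hp : MeasurePreserving p μ ν)
    {f : Y → ι} {g : Y → κ} (hf : MeasurableFibers f) (hg : MeasurableFibers g) :
    condPartitionEntropy μ (f ∘ p) (g ∘ p) = condPartitionEntropy ν f g := by
  rw [condPartitionEntropy, condPartitionEntropy, partitionEntropy_comp_measurePreserving hp hg,
    ← partitionEntropy_comp_measurePreserving hp (hf.prodMk hg)]
  rfl

end Reindexing

section Subadditivity

variable {X : Type*} [MeasurableSpace X] {μ : Measure X} [IsProbabilityMeasure μ]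
  {ι κ ι' κ' : Type*} [Fintype ι] [Fintype κ] [Fintype ι'] [Fintype κ']

theorem partitionEntropy_prodMk_le {f : X → ι} {g : X → κ} (hf : MeasurableFibers f)
    (hg : MeasurableFibers g) :
    partitionEntropy μ (fun x => (f x, g x)) ≤ partitionEntropy μ f + partitionEntropy μ g := by
  have := condPartitionEntropy_le_partitionEntropy (μ := μ) hf hg
  rw [condPartitionEntropy] at this
  linarith

theorem condPartitionEntropy_prodMk_le {f : X → ι} {g : X → κ} {f' : X → ι'} {g' : X → κ'}
    (hf : MeasurableFibers f) (hg : MeasurableFibers g) (hf' : MeasurableFibers f')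
    (hg' : MeasurableFibers g') :
    condPartitionEntropy μ (fun x => (f x, f' x)) (fun x => (g x, g' x))
      ≤ condPartitionEntropy μ f g + condPartitionEntropy μ f' g' := by
  have chain : condPartitionEntropy μ (fun x => (f x, f' x)) (fun x => (g x, g' x))
      = condPartitionEntropy μ f' (fun x => (g' x, f x, g x))
        + condPartitionEntropy μ f (fun x => (g x, g' x)) := by
    have h₁ : partitionEntropy μ (fun x => ((f x, f' x), g x, g' x))
        = partitionEntropy μ (fun x => (f' x, g' x, f x, g x)) :=
      partitionEntropy_comp_of_injective (μ := μ) (fun x => (f' x, g' x, f x, g x))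
        (φ := fun t => ((t.2.2.1, t.1), t.2.2.2, t.2.1)) fun s t h => by
          simp only [Prod.mk.injEq] at h
          exact Prod.ext h.1.2 (Prod.ext h.2.2 (Prod.ext h.1.1 h.2.1))
    have h₂ : partitionEntropy μ (fun x => (g' x, f x, g x))
        = partitionEntropy μ (fun x => (f x, g x, g' x)) :=
      partitionEntropy_comp_of_injective (μ := μ) (fun x => (f x, g x, g' x))
        (φ := fun t => (t.2.2, t.1, t.2.1)) fun s t h => by
          simp only [Prod.mk.injEq] at h
          exact Prod.ext h.2.1 (Prod.ext h.2.2 h.1)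
    simp only [condPartitionEntropy, h₁, h₂]
    ring
  have hg'fg : MeasurableFibers fun x => (g' x, f x, g x) := hg'.prodMk (hf.prodMk hg)
  rw [chain, add_comm (condPartitionEntropy μ f g)]
  exact add_le_add (condPartitionEntropy_le_comp hf' hg'fg Prod.fst)
    (condPartitionEntropy_le_comp hf (hg.prodMk hg') Prod.fst)

end Subadditivity

/-! ### Entropy rates -/

def itinerary {X ι : Type*} (T : X → X) (f : X → ι) (n : ℕ) (x : X) : Fin n → ι :=
  fun i => f (T^[i] x)

section Itinerary

variable {X Y : Type*} {T : X → X} {ι κ : Type*}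

theorem itinerary_add (T : X → X) (f : X → ι) (n m : ℕ) :
    itinerary T f (n + m)
      = Fin.appendEquiv n m ∘ fun x => (itinerary T f n x, itinerary T f m (T^[n] x)) := by
  funext x i
  refine Fin.addCases (fun i => ?_) (fun i => ?_) i
  · simp [itinerary]
  · simp only [itinerary, comp_apply, Fin.appendEquiv_apply, Fin.append_right, Fin.val_natAdd]
    rw [← iterate_add_apply, add_comm, iterate_add_apply]

theorem itinerary_one (T : X → X) (f : X → ι) : itinerary T f 1 = (fun i _ => i) ∘ f := by
  funext x i
  rw [Subsingleton.elim i 0]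
  rfl

theorem itinerary_comp (T : X → X) (f : X → ι) (φ : ι → κ) (n : ℕ) :
    itinerary T (φ ∘ f) n = (φ ∘ ·) ∘ itinerary T f n := rfl

theorem itinerary_prodMk (T : X → X) (f : X → ι) (g : X → κ) (n : ℕ) :
    itinerary T (fun x => (f x, g x)) n
      = (Equiv.arrowProdEquivProdArrow _ _ _).symm
        ∘ fun x => (itinerary T f n x, itinerary T g n x) := rfl

theorem itinerary_comp_semiconj {S : Y → Y} {p : Y → X} (h : Semiconj p S T) (f : X → ι)
    (n : ℕ) : itinerary T f n ∘ p = itinerary S (f ∘ p) n := by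
  funext y i
  simp [itinerary, (h.iterate_right i).eq]

theorem MeasurableFibers.itinerary [MeasurableSpace X] {f : X → ι} (hf : MeasurableFibers f)
    (hT : Measurable T) (n : ℕ) : MeasurableFibers (_root_.itinerary T f n) := fun w => by
  have : _root_.itinerary T f n ⁻¹' {w} = ⋂ i : Fin n, T^[i] ⁻¹' (f ⁻¹' {w i}) := by
    ext x
    simp [_root_.itinerary, funext_iff]
  rw [this]
  exact .iInter fun i => hT.iterate i (hf _)

theorem processEntropy_eq_partitionEntropy_itinerary [MeasurableSpace X] (μ : Measure X)
    [Fintype ι] (f : X → ι) (n : ℕ) :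
    processEntropy μ T f n = partitionEntropy μ (itinerary T f n) := rfl

end Itinerary

-- `limUnder` is a junk value unless the limit exists, e.g. by `tendsto_entropyRate`
noncomputable def entropyRate {X : Type*} [MeasurableSpace X] (μ : Measure X) (T : X → X)
    {ι : Type*} [Fintype ι] (f : X → ι) : ℝ :=
  limUnder atTop fun n : ℕ => processEntropy μ T f n / n

section EntropyRate

variable {X : Type*} [MeasurableSpace X] {μ : Measure X} [IsProbabilityMeasure μ] {T : X → X}
  {ι κ : Type*} [Fintype ι] [Fintype κ]

theorem processEntropy_add_le (hT : MeasurePreserving T μ μ) {f : X → ι}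
    (hf : MeasurableFibers f) (n m : ℕ) :
    processEntropy μ T f (n + m) ≤ processEntropy μ T f n + processEntropy μ T f m := by
  have hfn := hf.itinerary hT.measurable
  simp only [processEntropy_eq_partitionEntropy_itinerary]
  rw [itinerary_add, partitionEntropy_comp_of_injective _ (Fin.appendEquiv n m).injective,
    ← partitionEntropy_comp_measurePreserving (hT.iterate n) (hfn m)]
  exact partitionEntropy_prodMk_le (hfn n) ((hfn m).comp_measurable (hT.iterate n).measurable)

theorem tendsto_entropyRate (hT : MeasurePreserving T μ μ) {f : X → ι}
    (hf : MeasurableFibers f) :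
    Tendsto (fun n : ℕ => processEntropy μ T f n / n) atTop (𝓝 (entropyRate μ T f)) := by
  have hsub : Subadditive (processEntropy μ T f ·) := processEntropy_add_le hT hf
  have h := hsub.tendsto_lim ⟨0, by
    rintro _ ⟨n, rfl⟩
    exact div_nonneg (partitionEntropy_nonneg _) n.cast_nonneg⟩
  rwa [entropyRate, h.limUnder_eq]

theorem entropyRate_nonneg (hT : MeasurePreserving T μ μ) {f : X → ι}
    (hf : MeasurableFibers f) : 0 ≤ entropyRate μ T f :=
  ge_of_tendsto' (tendsto_entropyRate hT hf) fun n =>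
    div_nonneg (partitionEntropy_nonneg _) n.cast_nonneg

theorem limsup_ofReal_processEntropy_div (hT : MeasurePreserving T μ μ) {f : X → ι}
    (hf : MeasurableFibers f) :
    limsup (fun n : ℕ => ENNReal.ofReal (processEntropy μ T f n / n)) atTop
      = ENNReal.ofReal (entropyRate μ T f) :=
  ((ENNReal.continuous_ofReal.tendsto _).comp (tendsto_entropyRate hT hf)).limsup_eq

theorem ofReal_entropyRate_le_ksEntropy (hT : MeasurePreserving T μ μ) {f : X → ι}
    (hf : MeasurableFibers f) : ENNReal.ofReal (entropyRate μ T f) ≤ ksEntropy μ T := by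
  obtain ⟨k, ⟨e⟩⟩ : ∃ k, Nonempty (ι ≃ Fin k) := ⟨_, ⟨Fintype.equivFin ι⟩⟩
  have hproc : ∀ n, processEntropy μ T (e ∘ f) n = processEntropy μ T f n := fun n => by
    rw [processEntropy_eq_partitionEntropy_itinerary, itinerary_comp,
      partitionEntropy_comp_of_injective _ e.injective.comp_left]
    rfl
  have hef : MeasurableFibers (e ∘ f) := hf.comp e
  refine le_iSup_of_le k <| le_iSup₂_of_le (e ∘ f) hef.measurable ?_
  rw [limsup_ofReal_processEntropy_div hT hef]
  simp only [entropyRate, hproc, le_rfl]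

theorem condPartitionEntropy_itinerary_le (hT : MeasurePreserving T μ μ) {f : X → ι}
    {g : X → κ} (hf : MeasurableFibers f) (hg : MeasurableFibers g) {n : ℕ} (hn : 1 ≤ n) :
    condPartitionEntropy μ (itinerary T f n) (itinerary T g n)
      ≤ n * condPartitionEntropy μ f g := by
  have hf₁ := hf.itinerary hT.measurable
  have hg₁ := hg.itinerary hT.measurable
  have hι : Injective fun (i : ι) (_ : Fin 1) => i := fun _ _ h => congrFun h 0
  have hκ : Injective fun (r : κ) (_ : Fin 1) => r := fun _ _ h => congrFun h 0
  induction n, hn using Nat.le_induction with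
  | base =>
    rw [itinerary_one, itinerary_one, condPartitionEntropy_comp_of_injective _ _ hι hκ]
    simp
  | succ n hn ih =>
    rw [itinerary_add T f n 1, itinerary_add T g n 1, condPartitionEntropy_comp_of_injective _ _
      (Fin.appendEquiv n 1).injective (Fin.appendEquiv n 1).injective]
    have hstep : condPartitionEntropy μ (itinerary T f 1 ∘ T^[n]) (itinerary T g 1 ∘ T^[n])
        = condPartitionEntropy μ f g := by
      rw [condPartitionEntropy_comp_measurePreserving (hT.iterate n) (hf₁ 1) (hg₁ 1),
        itinerary_one, itinerary_one, condPartitionEntropy_comp_of_injective _ _ hι hκ]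
    have := condPartitionEntropy_prodMk_le (μ := μ) (hf₁ n) (hg₁ n)
      ((hf₁ 1).comp_measurable (hT.iterate n).measurable)
      ((hg₁ 1).comp_measurable (hT.iterate n).measurable)
    refine this.trans ?_
    rw [hstep]
    push_cast
    linarith

theorem entropyRate_le_add_condPartitionEntropy (hT : MeasurePreserving T μ μ) {f : X → ι}
    {g : X → κ} (hf : MeasurableFibers f) (hg : MeasurableFibers g) :
    entropyRate μ T f ≤ entropyRate μ T g + condPartitionEntropy μ f g := by
  refine le_of_tendsto_of_tendsto (tendsto_entropyRate hT hf)
    ((tendsto_entropyRate hT hg).add_const _) ?_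
  filter_upwards [eventually_ge_atTop 1] with n hn
  have hn' : (0 : ℝ) < n := by exact_mod_cast hn
  have hfn := hf.itinerary hT.measurable n
  have hgn := hg.itinerary hT.measurable n
  rw [div_add' _ _ _ hn'.ne', div_le_div_iff_of_pos_right hn']
  calc processEntropy μ T f n
      ≤ partitionEntropy μ (fun x => (itinerary T f n x, itinerary T g n x)) :=
        partitionEntropy_comp_le (hfn.prodMk hgn) Prod.fst
    _ = processEntropy μ T g n + condPartitionEntropy μ (itinerary T f n) (itinerary T g n) := by
        rw [condPartitionEntropy, processEntropy_eq_partitionEntropy_itinerary]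
        ring
    _ ≤ processEntropy μ T g n + condPartitionEntropy μ f g * n := by
        rw [mul_comm]
        gcongr
        exact condPartitionEntropy_itinerary_le hT hf hg hn

theorem entropyRate_prodMk_le (hT : MeasurePreserving T μ μ) {f : X → ι} {g : X → κ}
    (hf : MeasurableFibers f) (hg : MeasurableFibers g) :
    entropyRate μ T (fun x => (f x, g x)) ≤ entropyRate μ T f + entropyRate μ T g := by
  refine le_of_tendsto_of_tendsto' (tendsto_entropyRate hT (hf.prodMk hg))
    ((tendsto_entropyRate hT hf).add (tendsto_entropyRate hT hg)) fun n => ?_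
  rw [← add_div]
  gcongr
  simp only [processEntropy_eq_partitionEntropy_itinerary]
  rw [itinerary_prodMk, partitionEntropy_comp_of_injective _ (Equiv.injective _)]
  exact partitionEntropy_prodMk_le (hf.itinerary hT.measurable n) (hg.itinerary hT.measurable n)

end EntropyRate

section Factor

variable {X Y : Type*} [MeasurableSpace X] [MeasurableSpace Y] {ι : Type*} [Fintype ι]

theorem processEntropy_map_of_semiconj {ν : Measure Y} {S : Y → Y} {T : X → X} {p : Y → X}
    (hp : Measurable p) (hT : Measurable T) (h : Semiconj p S T) {f : X → ι}
    (hf : MeasurableFibers f) (n : ℕ) :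
    processEntropy (ν.map p) T f n = processEntropy ν S (f ∘ p) n := by
  rw [processEntropy_eq_partitionEntropy_itinerary, processEntropy_eq_partitionEntropy_itinerary,
    ← itinerary_comp_semiconj h, partitionEntropy_comp_measurePreserving ⟨hp, rfl⟩
      (hf.itinerary hT n)]

theorem ksEntropy_map_le {ν : Measure Y} {S : Y → Y} {T : X → X} {p : Y → X}
    (hp : Measurable p) (hT : Measurable T) (h : Semiconj p S T) :
    ksEntropy (ν.map p) T ≤ ksEntropy ν S :=
  iSup_le fun k => iSup₂_le fun f hf => by
    simp_rw [processEntropy_map_of_semiconj hp hT h hf.measurableFibers]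
    exact le_iSup_of_le k <| le_iSup₂_of_le (f ∘ p) (hf.comp hp) le_rfl

theorem MeasureTheory.MeasurePreserving.map_of_semiconj {ν : Measure Y} {S : Y → Y} {T : X → X}
    {p : Y → X} (hS : MeasurePreserving S ν ν) (hp : Measurable p) (hT : Measurable T)
    (h : Semiconj p S T) : MeasurePreserving T (ν.map p) (ν.map p) :=
  ⟨hT, by rw [Measure.map_map hT hp, ← h.comp_eq, ← Measure.map_map hp hS.measurable, hS.map_eq]⟩

theorem entropyRate_map_of_semiconj {ν : Measure Y} {S : Y → Y} {T : X → X} {p : Y → X}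
    (hp : Measurable p) (hT : Measurable T) (h : Semiconj p S T) {f : X → ι}
    (hf : MeasurableFibers f) : entropyRate (ν.map p) T f = entropyRate ν S (f ∘ p) := by
  simp only [entropyRate, processEntropy_map_of_semiconj hp hT h hf]

end Factor

section Product

variable {Y Z : Type*} [MeasurableSpace Y] [MeasurableSpace Z] {μ : Measure Y} {ν : Measure Z}
  [IsProbabilityMeasure μ] [IsProbabilityMeasure ν] {ι κ : Type*} [Fintype ι] [Fintype κ]

theorem partitionEntropy_prod {f : Y → ι} {g : Z → κ} (hf : MeasurableFibers f)
    (hg : MeasurableFibers g) :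
    partitionEntropy (μ.prod ν) (fun w => (f w.1, g w.2))
      = partitionEntropy μ f + partitionEntropy ν g := by
  have hfiber : ∀ t : ι × κ, (μ.prod ν).real ((fun w => (f w.1, g w.2)) ⁻¹' {t})
      = μ.real (f ⁻¹' {t.1}) * ν.real (g ⁻¹' {t.2}) := fun t => by
    rw [← measureReal_prod_prod]
    congr 1
    ext w
    simp [Prod.ext_iff]
  simp only [partitionEntropy_eq_sum_negMulLog_measureReal, hfiber, negMulLog_mul,
    Fintype.sum_prod_type, Finset.sum_add_distrib, ← Finset.sum_mul, ← Finset.mul_sum,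
    sum_measureReal_preimage_singleton_eq_one hf, sum_measureReal_preimage_singleton_eq_one hg,
    one_mul]

theorem processEntropy_prod {Ty : Y → Y} {Tz : Z → Z} (hTy : Measurable Ty)
    (hTz : Measurable Tz) {f : Y → ι} {g : Z → κ} (hf : MeasurableFibers f)
    (hg : MeasurableFibers g) (n : ℕ) :
    processEntropy (μ.prod ν) (Prod.map Ty Tz) (fun w => (f w.1, g w.2)) n
      = processEntropy μ Ty f n + processEntropy ν Tz g n := by
  have hzip : itinerary (Prod.map Ty Tz) (fun w => (f w.1, g w.2)) n
      = (Equiv.arrowProdEquivProdArrow _ _ _).symm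
        ∘ fun w => (itinerary Ty f n w.1, itinerary Tz g n w.2) := by
    funext w i
    simp [itinerary, Prod.map_iterate]
  rw [processEntropy_eq_partitionEntropy_itinerary, hzip,
    partitionEntropy_comp_of_injective _ (Equiv.injective _),
    partitionEntropy_prod (hf.itinerary hTy n) (hg.itinerary hTz n)]
  rfl

end Product

section KSEntropy

theorem ksEntropy_add_ksEntropy_le {Y Z : Type*} [MeasurableSpace Y] [MeasurableSpace Z]
    (μ : Measure Y) (ν : Measure Z) (S : Y → Y) (T : Z → Z) {c : ℝ≥0∞}
    (h : ∀ (k : ℕ) (f : Y → Fin k), Measurable f → ∀ (l : ℕ) (g : Z → Fin l), Measurable g →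
      limsup (fun n : ℕ => ENNReal.ofReal (processEntropy μ S f n / n)) atTop
        + limsup (fun n : ℕ => ENNReal.ofReal (processEntropy ν T g n / n)) atTop ≤ c) :
    ksEntropy μ S + ksEntropy ν T ≤ c := by
  -- over `Σ k, _ → Fin k` the suprema are over nonempty families, as `biSup_add_biSup_le'` needs
  simp only [ksEntropy, iSup_sigma' fun k (f : _ → Fin k) => ⨆ _ : Measurable f, _]
  exact ENNReal.biSup_add_biSup_le' ⟨⟨1, fun _ => 0⟩, measurable_const⟩
    ⟨⟨1, fun _ => 0⟩, measurable_const⟩ fun p hp q hq => h _ _ hp _ _ hq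

variable {Y Z : Type*} [MeasurableSpace Y] [MeasurableSpace Z] {μ : Measure Y} {ν : Measure Z}
  [IsProbabilityMeasure μ] [IsProbabilityMeasure ν]

theorem ksEntropy_add_le_ksEntropy_prod {Ty : Y → Y} {Tz : Z → Z}
    (hTy : MeasurePreserving Ty μ μ) (hTz : MeasurePreserving Tz ν ν) :
    ksEntropy μ Ty + ksEntropy ν Tz ≤ ksEntropy (μ.prod ν) (Prod.map Ty Tz) := by
  refine ksEntropy_add_ksEntropy_le μ ν Ty Tz fun k f hf l g hg => ?_
  have hf' := hf.measurableFibers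
  have hg' := hg.measurableFibers
  have hfg : MeasurableFibers fun w : Y × Z => (f w.1, g w.2) :=
    (hf'.comp_measurable measurable_fst).prodMk (hg'.comp_measurable measurable_snd)
  have hrate : entropyRate (μ.prod ν) (Prod.map Ty Tz) (fun w => (f w.1, g w.2))
      = entropyRate μ Ty f + entropyRate ν Tz g := by
    refine tendsto_nhds_unique (tendsto_entropyRate (hTy.prod hTz) hfg) ?_
    simp_rw [processEntropy_prod hTy.measurable hTz.measurable hf' hg', add_div]
    exact (tendsto_entropyRate hTy hf').add (tendsto_entropyRate hTz hg')
  rw [limsup_ofReal_processEntropy_div hTy hf', limsup_ofReal_processEntropy_div hTz hg',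
    ← ENNReal.ofReal_add (entropyRate_nonneg hTy hf') (entropyRate_nonneg hTz hg'), ← hrate]
  exact ofReal_entropyRate_le_ksEntropy (hTy.prod hTz) hfg

end KSEntropy

/-! ### Approximation by measurable rectangles -/

theorem isSetSemiring_measurableRectangles {Y Z : Type*} [MeasurableSpace Y] [MeasurableSpace Z] :
    IsSetSemiring (Set.image2 (· ×ˢ ·) {s : Set Y | MeasurableSet s} {t : Set Z | MeasurableSet t})
    where
  empty_mem := ⟨∅, .empty, ∅, .empty, Set.empty_prod⟩
  inter_mem := by
    rintro _ ⟨s, hs, t, ht, rfl⟩ _ ⟨s', hs', t', ht', rfl⟩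
    exact ⟨s ∩ s', hs.inter hs', t ∩ t', ht.inter ht', Set.prod_inter_prod.symm⟩
  sdiff_eq_sUnion' := by
    rintro _ ⟨s, hs, t, ht, rfl⟩ _ ⟨s', hs', t', ht', rfl⟩
    classical
    refine ⟨{(s \ s') ×ˢ t, (s ∩ s') ×ˢ (t \ t')}, ?_, ?_, ?_⟩
    · simp only [Finset.coe_insert, Finset.coe_singleton, Set.insert_subset_iff,
        Set.singleton_subset_iff]
      exact ⟨Set.mem_image2_of_mem (hs.diff hs') ht,
        Set.mem_image2_of_mem (hs.inter hs') (ht.diff ht')⟩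
    · rw [Finset.coe_pair]
      refine Set.pairwise_pair.2 fun _ => ⟨?_, ?_⟩ <;>
        simp only [Function.onFun, id, Set.disjoint_left, Set.mem_prod, Set.mem_sdiff,
          Set.mem_inter_iff] <;> tauto
    · ext ⟨y, z⟩
      simp
      tauto

theorem exists_finset_measure_symmDiff_lt {Y Z : Type*} [MeasurableSpace Y] [MeasurableSpace Z]
    {m : Measure (Y × Z)} [IsFiniteMeasure m] {s : Set (Y × Z)} (hs : MeasurableSet s)
    {ε : ℝ≥0∞} (hε : 0 < ε) :
    ∃ t : Finset (Set Y × Set Z), (∀ r ∈ t, MeasurableSet r.1 ∧ MeasurableSet r.2) ∧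
      m ((⋃ r ∈ t, r.1 ×ˢ r.2) ∆ s) < ε := by
  obtain ⟨_, ⟨u, hu, huC, rfl⟩, hlt⟩ :=
    exists_measure_symmDiff_lt_of_generateFrom_isSetSemiring (μ := m)
      isSetSemiring_measurableRectangles ⟨{Set.univ}, Set.countable_singleton _,
        Set.singleton_subset_iff.2 ⟨_, .univ, _, .univ, Set.univ_prod_univ⟩, by simp⟩
      generateFrom_prod.symm hs hε
  have : ∀ r ∈ u, ∃ p : Set Y × Set Z, (MeasurableSet p.1 ∧ MeasurableSet p.2) ∧ p.1 ×ˢ p.2 = r :=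
    fun r hr => by
      obtain ⟨a, ha, b, hb, rfl⟩ := huC hr
      exact ⟨(a, b), ⟨ha, hb⟩, rfl⟩
  classical
  choose! pr hpr using this
  refine ⟨u.image pr, by simpa using fun r hr => (hpr r hr).1, ?_⟩
  convert hlt using 2
  rw [Finset.sup'_eq_sup, Finset.sup_set_eq_biUnion, Finset.set_biUnion_finset_image]
  exact congrArg (· ∆ s) (Set.iUnion₂_congr fun r hr => (hpr r hr).2)

theorem exists_comp_subset_iUnion_symmDiff {X ι κ : Type*} [Nonempty ι] (P : X → ι) (R : X → κ)
    (S : ι → Set κ) : ∃ ψ : κ → ι, {x | P x ≠ ψ (R x)} ⊆ ⋃ i, (P ⁻¹' {i}) ∆ (R ⁻¹' S i) := by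
  classical
  refine ⟨fun r => if h : ∃ i, r ∈ S i then h.choose else Classical.arbitrary ι, fun x hx => ?_⟩
  by_contra hmem
  have hall : ∀ i, P x = i ↔ R x ∈ S i := fun i => by
    have := not_exists.1 (Set.mem_iUnion.not.1 hmem) i
    rw [Set.mem_symmDiff] at this
    simp only [Set.mem_preimage, Set.mem_singleton_iff] at this
    tauto
  have hex : ∃ i, R x ∈ S i := ⟨P x, (hall _).1 rfl⟩
  exact hx (by simpa only [dif_pos hex] using (hall _).2 hex.choose_spec)

theorem exists_measureReal_ne_comp_prodMap_lt {Y : Type u} {Z : Type v} [MeasurableSpace Y]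
    [MeasurableSpace Z] {m : Measure (Y × Z)} [IsProbabilityMeasure m] {ι : Type*} [Fintype ι]
    [Nonempty ι] {P : Y × Z → ι} (hP : MeasurableFibers P) {δ : ℝ} (hδ : 0 < δ) :
    ∃ (α β : Type (max u v)) (_ : Fintype α) (_ : Fintype β) (f : Y → α) (g : Z → β)
      (ψ : α × β → ι), MeasurableFibers f ∧ MeasurableFibers g ∧
        m.real {w | P w ≠ ψ (f w.1, g w.2)} < δ := by
  classical
  set ε : ℝ≥0∞ := ENNReal.ofReal δ / Fintype.card ι
  have hε : 0 < ε := ENNReal.div_pos (ENNReal.ofReal_pos.2 hδ).ne' (ENNReal.natCast_ne_top _)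
  choose t ht hlt using fun i => exists_finset_measure_symmDiff_lt (m := m) (hP i) hε
  set 𝓡 := Finset.univ.biUnion t
  set f : Y → 𝓡 → Bool := fun y r => decide (y ∈ r.1.1)
  set g : Z → 𝓡 → Bool := fun z r => decide (z ∈ r.1.2)
  set S : ι → Set ((𝓡 → Bool) × (𝓡 → Bool)) := fun i => {p | ∃ r : 𝓡, r.1 ∈ t i ∧ p.1 r ∧ p.2 r}
  have hS : ∀ i, (fun w : Y × Z => (f w.1, g w.2)) ⁻¹' S i = ⋃ r ∈ t i, r.1 ×ˢ r.2 := fun i => by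
    ext w
    simp only [Set.mem_preimage, Set.mem_iUnion, Set.mem_prod, S, f, g, exists_prop,
      Set.mem_ofPred_eq, decide_eq_true_eq]
    exact ⟨fun ⟨r, hr, h⟩ => ⟨r, hr, h⟩, fun ⟨r, hr, h⟩ =>
      ⟨⟨r, Finset.mem_biUnion.2 ⟨i, Finset.mem_univ _, hr⟩⟩, hr, h⟩⟩
  have hR : ∀ r ∈ 𝓡, MeasurableSet r.1 ∧ MeasurableSet r.2 := fun r hr => by
    obtain ⟨i, -, hi⟩ := Finset.mem_biUnion.1 hr
    exact ht i r hi
  obtain ⟨ψ, hψ⟩ := exists_comp_subset_iUnion_symmDiff P (fun w => (f w.1, g w.2)) S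
  refine ⟨_, _, inferInstance, inferInstance, f, g, ψ, ?_, ?_, ?_⟩
  · exact Measurable.measurableFibers <| measurable_pi_iff.2 fun r =>
      measurable_to_bool <| by convert (hR r.1 r.2).1; ext; simp [f]
  · exact Measurable.measurableFibers <| measurable_pi_iff.2 fun r =>
      measurable_to_bool <| by convert (hR r.1 r.2).2; ext; simp [g]
  · refine ENNReal.toReal_lt_of_lt_ofReal ?_
    calc m {w | P w ≠ ψ (f w.1, g w.2)}
        ≤ ∑ i, m ((P ⁻¹' {i}) ∆ ((fun w => (f w.1, g w.2)) ⁻¹' S i)) :=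
          (measure_mono hψ).trans (measure_iUnion_fintype_le _ _)
      _ < ∑ _i : ι, ε := ENNReal.sum_lt_sum_of_nonempty Finset.univ_nonempty fun i _ => by
          rw [hS, symmDiff_comm]
          exact hlt i
      _ = ENNReal.ofReal δ := by
          rw [Finset.sum_const, Finset.card_univ, nsmul_eq_mul,
            ENNReal.mul_div_cancel (by simp) (ENNReal.natCast_ne_top _)]
/-! ### Joinings -/

section Joining

variable {Y Z : Type*} [MeasurableSpace Y] [MeasurableSpace Z] {T₁ : Y → Y} {T₂ : Z → Z}
  {m : Measure (Y × Z)} [IsProbabilityMeasure m]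

theorem entropyRate_le_add_add_qaryEntropy (hT₁ : Measurable T₁) (hT₂ : Measurable T₂)
    (hm : MeasurePreserving (Prod.map T₁ T₂) m m) {ι α β : Type*} [Fintype ι] [DecidableEq ι]
    [Fintype α] [Fintype β] {P : Y × Z → ι} {f : Y → α} {g : Z → β} (hP : MeasurableFibers P)
    (hf : MeasurableFibers f) (hg : MeasurableFibers g) (ψ : α × β → ι) :
    entropyRate m (Prod.map T₁ T₂) P ≤ entropyRate (m.map Prod.fst) T₁ f
      + entropyRate (m.map Prod.snd) T₂ g
      + qaryEntropy (Fintype.card ι) (m.real {w | P w ≠ ψ (f w.1, g w.2)}) := by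
  have hf₁ : MeasurableFibers (f ∘ @Prod.fst Y Z) := hf.comp_measurable measurable_fst
  have hg₂ : MeasurableFibers (g ∘ @Prod.snd Y Z) := hg.comp_measurable measurable_snd
  have hR : MeasurableFibers fun w : Y × Z => (f w.1, g w.2) := hf₁.prodMk hg₂
  rw [entropyRate_map_of_semiconj (S := Prod.map T₁ T₂) measurable_fst hT₁ (fun _ => rfl) hf,
    entropyRate_map_of_semiconj (S := Prod.map T₁ T₂) measurable_snd hT₂ (fun _ => rfl) hg]
  calc _ ≤ _ := entropyRate_le_add_condPartitionEntropy hm hP hR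
    _ ≤ _ := add_le_add (entropyRate_prodMk_le hm hf₁ hg₂) <|
      (condPartitionEntropy_le_comp hP hR ψ).trans
        (condPartitionEntropy_le_qaryEntropy hP (hR.comp ψ))

theorem ksEntropy_prodMap_le_add (hT₁ : Measurable T₁) (hT₂ : Measurable T₂)
    (hm : MeasurePreserving (Prod.map T₁ T₂) m m) :
    ksEntropy m (Prod.map T₁ T₂)
      ≤ ksEntropy (m.map Prod.fst) T₁ + ksEntropy (m.map Prod.snd) T₂ := by
  have := Measure.isProbabilityMeasure_map (μ := m) measurable_fst.aemeasurable
  have := Measure.isProbabilityMeasure_map (μ := m) measurable_snd.aemeasurable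
  have h₁ : MeasurePreserving T₁ (m.map Prod.fst) (m.map Prod.fst) :=
    hm.map_of_semiconj measurable_fst hT₁ fun _ => rfl
  have h₂ : MeasurePreserving T₂ (m.map Prod.snd) (m.map Prod.snd) :=
    hm.map_of_semiconj measurable_snd hT₂ fun _ => rfl
  refine iSup_le fun k => iSup₂_le fun P hP => ?_
  replace hP := hP.measurableFibers
  have : Nonempty (Fin k) := ⟨P (nonempty_of_isProbabilityMeasure m).some⟩
  rw [limsup_ofReal_processEntropy_div hm hP]
  refine ENNReal.le_of_forall_pos_le_add fun ε hε _ => ?_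
  obtain ⟨δ, hδ, hfano⟩ : ∃ δ > 0, ∀ e, |e| < δ → qaryEntropy k e < ε := by
    have h := (qaryEntropy_continuous (q := k)).tendsto 0
    rw [qaryEntropy_zero] at h
    obtain ⟨δ, hδ, hδε⟩ := Metric.tendsto_nhds_nhds.1 h ε hε
    exact ⟨δ, hδ, fun e he => (le_abs_self _).trans_lt <| by simpa using hδε (by simpa using he)⟩
  obtain ⟨α, β, _, _, f, g, ψ, hf, hg, herr⟩ :=
    exists_measureReal_ne_comp_prodMap_lt (m := m) hP hδ
  have hrate := entropyRate_le_add_add_qaryEntropy hT₁ hT₂ hm hP hf hg ψ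
  rw [Fintype.card_fin] at hrate
  calc ENNReal.ofReal (entropyRate m (Prod.map T₁ T₂) P)
      ≤ ENNReal.ofReal (entropyRate (m.map Prod.fst) T₁ f)
        + ENNReal.ofReal (entropyRate (m.map Prod.snd) T₂ g)
        + ENNReal.ofReal (qaryEntropy k (m.real {w | P w ≠ ψ (f w.1, g w.2)})) :=
      (ENNReal.ofReal_le_ofReal hrate).trans <|
        ENNReal.ofReal_add_le.trans (add_le_add_left ENNReal.ofReal_add_le _)
    _ ≤ _ := by
      gcongr
      · exact ofReal_entropyRate_le_ksEntropy h₁ hf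
      · exact ofReal_entropyRate_le_ksEntropy h₂ hg
      · refine (ENNReal.ofReal_le_ofReal (hfano _ ?_).le).trans_eq ENNReal.ofReal_coe_nnreal
        rwa [abs_of_nonneg measureReal_nonneg]

end Joining

theorem ksEntropy_le_add_of_semiconj_measurableEquiv {X Y Z : Type*} [MeasurableSpace X]
    [MeasurableSpace Y] [MeasurableSpace Z] {μ : Measure X} [IsProbabilityMeasure μ] {S : X → X}
    {T₁ : Y → Y} {T₂ : Z → Z} (hS : MeasurePreserving S μ μ) (hT₁ : Measurable T₁)
    (hT₂ : Measurable T₂) (e : X ≃ᵐ Y × Z) (he : Semiconj e S (Prod.map T₁ T₂)) :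
    ksEntropy μ S ≤ ksEntropy (μ.map (Prod.fst ∘ e)) T₁ + ksEntropy (μ.map (Prod.snd ∘ e)) T₂ := by
  have := Measure.isProbabilityMeasure_map (μ := μ) e.measurable.aemeasurable
  calc ksEntropy μ S = ksEntropy ((μ.map e).map e.symm) S := by rw [e.map_symm_map]
    _ ≤ ksEntropy (μ.map e) (Prod.map T₁ T₂) :=
      ksEntropy_map_le e.symm.measurable hS.measurable
        (he.inverse_left e.left_inv e.right_inv)
    _ ≤ _ := ksEntropy_prodMap_le_add hT₁ hT₂
      (hS.map_of_semiconj e.measurable (hT₁.prodMap hT₂) he)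
    _ = _ := by rw [Measure.map_map measurable_fst e.measurable,
      Measure.map_map measurable_snd e.measurable]

section Convolution

variable {G : Type*} [Group G] [MeasurableSpace G] [MeasurableMul₂ G] [MeasurableInv G]
  {μ ν : Measure G} [IsProbabilityMeasure μ] [IsProbabilityMeasure ν] {T : G → G}

theorem ksEntropy_prod_le_ksEntropy_left_add_ksEntropy_mconv (hμ : MeasurePreserving T μ μ)
    (hν : MeasurePreserving T ν ν) (hT : ∀ x y, T (x * y) = T x * T y) :
    ksEntropy (μ.prod ν) (Prod.map T T) ≤ ksEntropy μ T + ksEntropy (μ.mconv ν) T := by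
  have h := ksEntropy_le_add_of_semiconj_measurableEquiv (hμ.prod hν) hμ.measurable hμ.measurable
    (MeasurableEquiv.shearMulRight G) fun w => Prod.ext rfl (hT w.1 w.2).symm
  rw [show Prod.fst ∘ MeasurableEquiv.shearMulRight G = Prod.fst from rfl,
    Measure.map_fst_prod, measure_univ, one_smul] at h
  exact h

theorem ksEntropy_prod_le_ksEntropy_right_add_ksEntropy_mconv (hμ : MeasurePreserving T μ μ)
    (hν : MeasurePreserving T ν ν) (hT : ∀ x y, T (x * y) = T x * T y) :
    ksEntropy (μ.prod ν) (Prod.map T T) ≤ ksEntropy ν T + ksEntropy (μ.mconv ν) T := by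
  -- `(x, y) ↦ (y, x * y)`
  set e := MeasurableEquiv.prodComm.trans (MeasurableEquiv.shearDivRight G).symm
  have h := ksEntropy_le_add_of_semiconj_measurableEquiv (hμ.prod hν) hμ.measurable hμ.measurable
    e fun w => Prod.ext rfl (hT w.1 w.2).symm
  rw [show Prod.fst ∘ e = Prod.snd from rfl, Measure.map_snd_prod, measure_univ, one_smul] at h
  exact h

end Convolution

theorem entropy_le_entropy_mconv {G : Type*} [Group G] [TopologicalSpace G]
    [IsTopologicalGroup G] [CompactSpace G] [TopologicalSpace.MetrizableSpace G]
    [MeasurableSpace G] [BorelSpace G]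
    (T : G → G) (hTcont : Continuous T) (hThom : ∀ x y : G, T (x * y) = T x * T y)
    (μ ν : Measure G) [IsProbabilityMeasure μ] [IsProbabilityMeasure ν]
    (hμ : μ.map T = μ) (hν : ν.map T = ν) :
    (ksEntropy μ T < ⊤ → ksEntropy ν T ≤ ksEntropy (μ.mconv ν) T) ∧
    (ksEntropy ν T < ⊤ → ksEntropy μ T ≤ ksEntropy (μ.mconv ν) T) := by
  have hμT : MeasurePreserving T μ μ := ⟨hTcont.measurable, hμ⟩
  have hνT : MeasurePreserving T ν ν := ⟨hTcont.measurable, hν⟩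
  have hprod := ksEntropy_add_le_ksEntropy_prod hμT hνT
  refine ⟨fun hfin => ?_, fun hfin => ?_⟩
  · refine (ENNReal.add_le_add_iff_left hfin.ne).1 (hprod.trans ?_)
    exact ksEntropy_prod_le_ksEntropy_left_add_ksEntropy_mconv hμT hνT hThom
  · refine (ENNReal.add_le_add_iff_left hfin.ne).1 ((add_comm _ _).le.trans (hprod.trans ?_))
    exact ksEntropy_prod_le_ksEntropy_right_add_ksEntropy_mconv hμT hνT hThom
end

section
/- In the group-extension setting, let μ₀ ∈ M(T₀). Then: (1) if ν ∈ M(T₂) and μ ∈ M(T₁, μ₀), the convolution ν*μ (the pushforward of ν×μ under (y,x) ↦ yx) lies in M(T₁, μ₀); (2) if μ ∈ M(T₁, μ₀), then m*μ = μ₀', where m is the normalized Haar measure on G₂. -/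
open MeasureTheory Filter
open scoped ENNReal

/-- `M(T, μ₀)`: the set of `T`-invariant Borel probability measures projecting to `μ₀`
under the factor map `φ`. -/
def MInvProj {X Y : Type*} [MeasurableSpace X] [MeasurableSpace Y]
    (T : X → X) (φ : X → Y) (μ₀ : Measure Y) : Set (Measure X) :=
  {μ | IsProbabilityMeasure μ ∧ μ.map T = μ ∧ μ.map φ = μ₀}

/-- The convolution of a measure `ν` on the acting group `G₂` with a measure `μ` on `G₁`:
the pushforward of `ν × μ` under `(y, x) ↦ y * x`. -/
noncomputable def subgroupConv {G₁ : Type*} [Group G₁] [MeasurableSpace G₁]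
    (G₂ : Subgroup G₁) (ν : Measure G₂) (μ : Measure G₁) : Measure G₁ :=
  (ν.prod μ).map (fun p : G₂ × G₁ => (p.1 : G₁) * p.2)

/-
Part (1) is a transport argument: `T₁ ∘ π = π ∘ (T₂ × T₁)` for `π (y, x) = y * x`, and
`φ ∘ π = φ ∘ Prod.snd` because `G₂` is normal. For part (2), by Fubini
`∫ f d(m * μ) = ∫ F dμ` with `F x = ∫ f (y * x) dm(y)`; right invariance of Haar measure on the
compact group `G₂` makes `F` constant on cosets, so `∫ F dμ` only depends on `μ ∘ φ⁻¹ = μ₀` and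
equals `∫ f dμ₀'`. Finite Borel measures on a metrizable space are determined by the integrals of
bounded continuous functions.
-/

theorem MeasureTheory.Measure.isMulRightInvariant_of_compactSpace {G : Type*} [Group G]
    [TopologicalSpace G] [IsTopologicalGroup G] [CompactSpace G] [MeasurableSpace G]
    [BorelSpace G] (μ : Measure G) [μ.IsHaarMeasure] : μ.IsMulRightInvariant := by
  refine ⟨fun g => ?_⟩
  have hmap := Measure.isMulInvariant_eq_smul_of_compactSpace (μ.map (· * g)) μ
  have hmass : μ.map (· * g) Set.univ = μ Set.univ := by
    rw [Measure.map_apply (measurable_mul_const g) MeasurableSet.univ, Set.preimage_univ]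
  have hc : Measure.haarScalarFactor (μ.map (· * g)) μ = 1 := by
    rw [hmap, Measure.smul_apply, ENNReal.smul_def, smul_eq_mul] at hmass
    exact_mod_cast (ENNReal.mul_eq_right (measure_univ_pos.mpr (NeZero.ne μ)).ne'
      (measure_ne_top μ _)).mp hmass
  rw [hmap, hc, one_smul]

section Measurable

variable {G : Type*} [Group G] [MeasurableSpace G] (H : Subgroup G)

theorem integral_mul_eq_of_mk_eq [H.Normal] [MeasurableMul H] (m : Measure H)
    [m.IsMulRightInvariant] (f : G → ℝ) {x x' : G} (h : (x : G ⧸ H) = x') :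
    ∫ y : H, f (y * x) ∂m = ∫ y : H, f (y * x') ∂m := by
  have hmem : x * x'⁻¹ ∈ H := by
    simpa [mul_assoc] using ‹H.Normal›.conj_mem _ (QuotientGroup.eq.mp h.symm) x'
  calc ∫ y : H, f (y * x) ∂m = ∫ y : H, f ((y * ⟨x * x'⁻¹, hmem⟩ : H) * x') ∂m := by
        simp [mul_assoc]
    _ = ∫ y : H, f (y * x') ∂m := integral_mul_right_eq_self (fun y : H => f (y * x')) _

variable [MeasurableMul₂ G]

theorem measurable_coe_fst_mul_snd : Measurable fun p : H × G => (p.1 : G) * p.2 :=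
  (measurable_subtype_coe.comp measurable_fst).mul measurable_snd

instance isProbabilityMeasure_subgroupConv (ν : Measure H) [IsProbabilityMeasure ν]
    (μ : Measure G) [IsProbabilityMeasure μ] : IsProbabilityMeasure (subgroupConv H ν μ) :=
  Measure.isProbabilityMeasure_map (measurable_coe_fst_mul_snd H).aemeasurable

instance isFiniteMeasure_subgroupConv (ν : Measure H) [IsFiniteMeasure ν]
    (μ : Measure G) [IsFiniteMeasure μ] : IsFiniteMeasure (subgroupConv H ν μ) :=
  Measure.isFiniteMeasure_map _ _

theorem map_subgroupConv {T : G → G} {S : H → H} (hT : Measurable T) (hS : Measurable S)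
    (hTS : ∀ (y : H) (x : G), T (y * x) = S y * T x) (ν : Measure H) [SFinite ν]
    (μ : Measure G) [SFinite μ] :
    (subgroupConv H ν μ).map T = subgroupConv H (ν.map S) (μ.map T) := by
  have hcomp : T ∘ (fun p : H × G => (p.1 : G) * p.2)
      = (fun p : H × G => (p.1 : G) * p.2) ∘ Prod.map S T :=
    funext fun p => hTS p.1 p.2
  rw [subgroupConv, subgroupConv, Measure.map_map hT (measurable_coe_fst_mul_snd H), hcomp,
    ← Measure.map_map (measurable_coe_fst_mul_snd H) (hS.prodMap hT),
    Measure.map_prod_map _ _ hS hT]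

theorem map_mk_subgroupConv [H.Normal] (ν : Measure H) [IsProbabilityMeasure ν]
    (μ : Measure G) [SFinite μ] :
    (subgroupConv H ν μ).map ((↑) : G → G ⧸ H) = μ.map (↑) := by
  have hcomp : ((↑) : G → G ⧸ H) ∘ (fun p : H × G => (p.1 : G) * p.2) = (↑) ∘ Prod.snd :=
    funext fun p => by
      simp only [Function.comp_apply, QuotientGroup.mk_mul,
        (QuotientGroup.eq_one_iff (p.1 : G)).mpr p.1.2, one_mul]
  rw [subgroupConv, Measure.map_map QuotientGroup.measurable_coe (measurable_coe_fst_mul_snd H),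
    hcomp, ← Measure.map_map QuotientGroup.measurable_coe measurable_snd, Measure.map_snd_prod,
    measure_univ, one_smul]

theorem subgroupConv_mem_MInvProj [H.Normal] {T : G → G} {S : H → H} (hT : Measurable T)
    (hS : Measurable S) (hTS : ∀ (y : H) (x : G), T (y * x) = S y * T x)
    {μ₀ : Measure (G ⧸ H)} {ν : Measure H} [IsProbabilityMeasure ν] (hν : ν.map S = ν)
    {μ : Measure G} (hμ : μ ∈ MInvProj T (↑) μ₀) : subgroupConv H ν μ ∈ MInvProj T (↑) μ₀ := by
  obtain ⟨hμp, hμT, hμφ⟩ := hμ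
  exact ⟨inferInstance, by rw [map_subgroupConv H hT hS hTS, hν, hμT],
    by rw [map_mk_subgroupConv, hμφ]⟩

end Measurable

section Compact

variable {G : Type*} [Group G] [TopologicalSpace G] [CompactSpace G] [MeasurableSpace G]
  [BorelSpace G] [MeasurableMul₂ G] (H : Subgroup G)

theorem integral_subgroupConv (f : C(G, ℝ)) (ν : Measure H) [IsFiniteMeasure ν]
    (μ : Measure G) [IsFiniteMeasure μ] :
    ∫ x, f x ∂subgroupConv H ν μ = ∫ x, ∫ y : H, f (y * x) ∂ν ∂μ := by
  rw [subgroupConv, integral_map (measurable_coe_fst_mul_snd H).aemeasurable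
    f.continuous.aestronglyMeasurable]
  refine integral_prod_symm _ ((integrable_map_measure f.continuous.aestronglyMeasurable
    (measurable_coe_fst_mul_snd H).aemeasurable).mp ?_)
  exact f.continuous.integrable_of_hasCompactSupport (HasCompactSupport.of_compactSpace _)

theorem integral_subgroupConv_eq_integral_quotient [H.Normal] [MeasurableMul H] (m : Measure H)
    [IsFiniteMeasure m] [m.IsMulRightInvariant] (f : C(G, ℝ)) (μ : Measure G)
    [IsFiniteMeasure μ] :
    ∫ x, f x ∂subgroupConv H m μ =
      ∫ z : G ⧸ H, ∫ y : H, f (y * Quotient.out z) ∂m ∂μ.map (↑) := by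
  set F : G → ℝ := fun x => ∫ y : H, f (y * x) ∂m
  have hF : ∀ x : G, F (Quotient.out (x : G ⧸ H)) = F x := fun x =>
    integral_mul_eq_of_mk_eq H m f (Quotient.out_eq _)
  have hFm : Measurable F :=
    (f.continuous.measurable.comp ((measurable_subtype_coe.comp measurable_snd).mul
      measurable_fst)).stronglyMeasurable.integral_prod_right'.measurable
  have hFout : Measurable fun z : G ⧸ H => F (Quotient.out z) := by
    rw [QuotientGroup.measurable_from_quotient]
    simpa only [Function.comp_def, hF] using hFm
  rw [integral_subgroupConv, integral_map QuotientGroup.measurable_coe.aemeasurable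
    hFout.aestronglyMeasurable]
  exact integral_congr_ae (Eventually.of_forall fun x => (hF x).symm)

end Compact

theorem subgroupConv_mem_and_haar_conv_eq_general {G₁ : Type*} [Group G₁]
    [TopologicalSpace G₁] [IsTopologicalGroup G₁] [CompactSpace G₁]
    [TopologicalSpace.MetrizableSpace G₁] [MeasurableSpace G₁] [BorelSpace G₁]
    (G₂ : Subgroup G₁) [G₂.Normal] (hG₂closed : IsClosed (G₂ : Set G₁))
    (m : Measure G₂) [m.IsHaarMeasure]
    (T₁ : G₁ ≃ₜ G₁) (T₂ : G₂ ≃* G₂) (hT₂cont : Continuous T₂)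
    (hcomm : ∀ (y : G₂) (x : G₁), T₁ ((y : G₁) * x) = (T₂ y : G₁) * T₁ x)
    (μ₀ : Measure (G₁ ⧸ G₂))
    (μ₀' : Measure G₁) [IsProbabilityMeasure μ₀']
    (hext : ∀ f : C(G₁, ℝ), ∫ x, f x ∂μ₀' =
      ∫ z : G₁ ⧸ G₂, ∫ y : G₂, f ((y : G₁) * Quotient.out z) ∂m ∂μ₀) :
    (∀ ν : Measure G₂, IsProbabilityMeasure ν → ν.map (⇑T₂) = ν →
      ∀ μ ∈ MInvProj (⇑T₁) (QuotientGroup.mk (s := G₂)) μ₀,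
        subgroupConv G₂ ν μ ∈ MInvProj (⇑T₁) (QuotientGroup.mk (s := G₂)) μ₀) ∧
    (∀ μ ∈ MInvProj (⇑T₁) (QuotientGroup.mk (s := G₂)) μ₀,
      subgroupConv G₂ m μ = μ₀') := by
  have : CompactSpace G₂ := isCompact_iff_compactSpace.mp hG₂closed.isCompact
  have : SecondCountableTopology G₁ := by
    let := TopologicalSpace.metrizableSpaceMetric G₁
    infer_instance
  have := m.isMulRightInvariant_of_compactSpace
  refine ⟨fun ν _ hν μ hμ => subgroupConv_mem_MInvProj G₂ T₁.continuous.measurable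
    hT₂cont.measurable hcomm hν hμ, fun μ hμ => ?_⟩
  obtain ⟨hμp, -, hμφ⟩ := hμ
  refine ext_of_forall_integral_eq_of_IsFiniteMeasure fun f => ?_
  subst hμφ
  exact (integral_subgroupConv_eq_integral_quotient G₂ m f.toContinuousMap μ).trans
    (hext f.toContinuousMap).symm

/-- Lemma 3.4: in the group-extension setting, for `μ₀ ∈ M(T₀)`:
(1) if `ν ∈ M(T₂)` and `μ ∈ M(T₁, μ₀)` then `ν * μ ∈ M(T₁, μ₀)`;
(2) if `μ ∈ M(T₁, μ₀)` then `m * μ = μ₀'`, the Haar extension of `μ₀`. -/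
theorem subgroupConv_mem_and_haar_conv_eq {G₁ : Type*} [Group G₁]
    [TopologicalSpace G₁] [IsTopologicalGroup G₁] [CompactSpace G₁]
    [TopologicalSpace.MetrizableSpace G₁] [MeasurableSpace G₁] [BorelSpace G₁]
    (G₂ : Subgroup G₁) [G₂.Normal] (hG₂closed : IsClosed (G₂ : Set G₁))
    (m : Measure G₂) [m.IsHaarMeasure] [IsProbabilityMeasure m]
    (T₁ : G₁ ≃ₜ G₁) (T₂ : G₂ ≃* G₂) (hT₂cont : Continuous T₂)
    (hcomm : ∀ (y : G₂) (x : G₁), T₁ ((y : G₁) * x) = (T₂ y : G₁) * T₁ x)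
    (T₀ : G₁ ⧸ G₂ → G₁ ⧸ G₂)
    (hT₀ : ∀ x : G₁, T₀ (QuotientGroup.mk x) = QuotientGroup.mk (T₁ x))
    (μ₀ : Measure (G₁ ⧸ G₂)) [IsProbabilityMeasure μ₀] (hμ₀ : μ₀.map T₀ = μ₀)
    (μ₀' : Measure G₁) [IsProbabilityMeasure μ₀']
    (hext : ∀ f : C(G₁, ℝ), ∫ x, f x ∂μ₀' =
      ∫ z : G₁ ⧸ G₂, ∫ y : G₂, f ((y : G₁) * Quotient.out z) ∂m ∂μ₀) :
    (∀ ν : Measure G₂, IsProbabilityMeasure ν → ν.map (⇑T₂) = ν →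
      ∀ μ ∈ MInvProj (⇑T₁) (QuotientGroup.mk (s := G₂)) μ₀,
        subgroupConv G₂ ν μ ∈ MInvProj (⇑T₁) (QuotientGroup.mk (s := G₂)) μ₀) ∧
    (∀ μ ∈ MInvProj (⇑T₁) (QuotientGroup.mk (s := G₂)) μ₀,
      subgroupConv G₂ m μ = μ₀') :=
  subgroupConv_mem_and_haar_conv_eq_general G₂ hG₂closed m T₁ T₂ hT₂cont hcomm μ₀ μ₀' hext
end

section
/- In the group-extension setting with maps π, π₁ : G₂×G₁ → G₂×G₁ components π(y,x) = yx and π₁(y,x) = y, set B₁ = π₁⁻¹(ℱ) and B_c = π⁻¹(𝔅), where ℱ, 𝔅 are the Borel σ-algebras of G₂, G₁. Let μ₀ ∈ M(T₀) and μ ∈ M(T₁, μ₀). Then B₁ and B_c are independent with respect to the product measure m×μ if and only if μ = μ₀'. -/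
open MeasureTheory Filter
open scoped ENNReal

namespace MeasureTheory

open ProbabilityTheory

section ShearAction

variable {G X : Type*} [Group G] [MulAction G X] [MeasurableSpace G] [MeasurableSpace X]
  [MeasurableSMul₂ G X]

theorem measurePreserving_prod_smul (m : Measure G) (ν : Measure X) [SFinite m] [SFinite ν]
    [SMulInvariantMeasure G X ν] :
    MeasurePreserving (fun p : G × X => (p.1, p.1 • p.2)) (m.prod ν) (m.prod ν) :=
  (MeasurePreserving.id m).skew_product (measurable_fst.smul measurable_snd)
    (.of_forall (MeasureTheory.map_smul · ν))

theorem measurePreserving_prod_inv_smul [MeasurableInv G] (m : Measure G) (ν : Measure X)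
    [SFinite m] [SFinite ν] [SMulInvariantMeasure G X ν] :
    MeasurePreserving (fun p : G × X => (p.1, p.1⁻¹ • p.2)) (m.prod ν) (m.prod ν) :=
  (MeasurePreserving.id m).skew_product (measurable_fst.inv.smul measurable_snd)
    (.of_forall fun g => MeasureTheory.map_smul g⁻¹ ν)

variable [MeasurableMul G] (m : Measure G) [IsProbabilityMeasure m] [m.IsMulLeftInvariant]
  (μ : Measure X) [IsProbabilityMeasure μ]

theorem smulInvariantMeasure_map_smul_prod :
    SMulInvariantMeasure G X ((m.prod μ).map fun p => p.1 • p.2) := by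
  refine ((smulInvariantMeasure_tfae G _).out 0 5).2 fun g => ?_
  have hcomp : (g • ·) ∘ (fun p : G × X => p.1 • p.2) =
      (fun p : G × X => p.1 • p.2) ∘ Prod.map (g * ·) id := by
    funext p
    exact (mul_smul g p.1 p.2).symm
  have hact : Measurable fun p : G × X => p.1 • p.2 := measurable_fst.smul measurable_snd
  rw [Measure.map_map (measurable_const_smul g) hact, hcomp,
    ← Measure.map_map hact ((measurable_const_mul g).prodMap measurable_id),
    ← Measure.map_prod_map _ _ (measurable_const_mul g) measurable_id, map_mul_left_eq_self,
    Measure.map_id]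

theorem indepFun_fst_smul_iff [MeasurableInv G] :
    IndepFun Prod.fst (fun p : G × X => p.1 • p.2) (m.prod μ) ↔ SMulInvariantMeasure G X μ := by
  set ν := (m.prod μ).map fun p => p.1 • p.2 with hν
  have hact : Measurable fun p : G × X => p.1 • p.2 := measurable_fst.smul measurable_snd
  have : SMulInvariantMeasure G X ν := smulInvariantMeasure_map_smul_prod m μ
  rw [indepFun_iff_map_prod_eq_prod_map_map measurable_fst.aemeasurable
    hact.aemeasurable, Measure.map_fst_prod, measure_univ, one_smul, ← hν]
  constructor
  · intro h
    have hprod : m.prod μ = m.prod ν := calc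
      m.prod μ = ((m.prod μ).map fun p => (p.1, p.1 • p.2)).map
          fun p => (p.1, p.1⁻¹ • p.2) := by
        rw [Measure.map_map (measurePreserving_prod_inv_smul m ν).measurable
          (measurable_fst.prodMk hact)]
        simp [Function.comp_def, inv_smul_smul]
      _ = m.prod ν := by rw [h, (measurePreserving_prod_inv_smul m ν).map_eq]
    have hμν : μ = ν := by
      simpa only [Measure.map_snd_prod, measure_univ, one_smul] using
        congrArg (Measure.map Prod.snd) hprod
    rwa [hμν]
  · intro
    have hνμ : ν = μ := calc
      ν = ((m.prod μ).map fun p => (p.1, p.1 • p.2)).map Prod.snd := by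
        rw [Measure.map_map measurable_snd (measurePreserving_prod_smul m μ).measurable]
        rfl
      _ = μ := by
        rw [(measurePreserving_prod_smul m μ).map_eq, Measure.map_snd_prod, measure_univ, one_smul]
    rw [hνμ]
    exact (measurePreserving_prod_smul m μ).map_eq

end ShearAction

theorem Measure.IsHaarMeasure.isMulRightInvariant_of_isProbabilityMeasure {G : Type*} [Group G]
    [TopologicalSpace G] [IsTopologicalGroup G] [LocallyCompactSpace G] [MeasurableSpace G]
    [BorelSpace G] (m : Measure G) [m.IsHaarMeasure] [IsProbabilityMeasure m] :
    m.IsMulRightInvariant where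
  map_mul_right_eq_self g :=
    have : IsProbabilityMeasure (m.map (· * g)) :=
      isProbabilityMeasure_map (measurable_mul_const g).aemeasurable
    Measure.isHaarMeasure_eq_of_isProbabilityMeasure _ m

section HaarExtension

variable {G : Type*} [Group G] [MeasurableSpace G] {H : Subgroup G}

def IsHaarExtension [TopologicalSpace G] (m : Measure H) (μ₀ : Measure (G ⧸ H))
    (μ₀' : Measure G) : Prop :=
  ∀ f : C(G, ℝ), ∫ x, f x ∂μ₀' = ∫ z : G ⧸ H, ∫ y : H, f ((y : G) * Quotient.out z) ∂m ∂μ₀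

/-- By normality `x = k * out ⟦x⟧` for some `k ∈ H`, and right invariance absorbs `k`. -/
theorem integral_mul_out_mk {E : Type*} [NormedAddCommGroup E] [NormedSpace ℝ E] [H.Normal]
    [MeasurableMul H] (m : Measure H) [m.IsMulRightInvariant] (f : G → E) (x : G) :
    ∫ y : H, f (y * (x : G ⧸ H).out) ∂m = ∫ y : H, f (y * x) ∂m := by
  obtain ⟨h, hh⟩ := QuotientGroup.mk_out_eq_mul H x
  set a := (x : G ⧸ H).out
  have hk : a * (h : G)⁻¹ * a⁻¹ ∈ H := Subgroup.Normal.conj_mem ‹_› _ (H.inv_mem h.2) a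
  have hx : ∀ y : H, (y : G) * x = ((y * ⟨_, hk⟩ : H) : G) * a := by
    intro y
    simp only [Subgroup.coe_mul, hh]
    group
  simp_rw [hx]
  exact (integral_mul_right_eq_self (fun y : H => f (y * a)) _).symm

variable [TopologicalSpace G] [BorelSpace G] [HasOuterApproxClosed G] [MeasurableMul H]
  {m : Measure H} {μ₀ : Measure (G ⧸ H)} {μ₀' : Measure G}
  [IsFiniteMeasure μ₀']

theorem IsHaarExtension.smulInvariantMeasure [ContinuousMul G] [m.IsMulLeftInvariant]
    (hext : IsHaarExtension m μ₀ μ₀') : SMulInvariantMeasure H G μ₀' := by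
  refine ((smulInvariantMeasure_tfae H μ₀').out 0 5).2 fun g => ?_
  refine ext_of_forall_integral_eq_of_IsFiniteMeasure fun f => ?_
  let fg : C(G, ℝ) := f.toContinuousMap.comp ⟨((g : G) * ·), continuous_const_mul _⟩
  calc ∫ x, f x ∂μ₀'.map (g • ·)
      = ∫ x, fg x ∂μ₀' :=
        integral_map (measurable_const_smul g).aemeasurable f.continuous.aestronglyMeasurable
    _ = ∫ z : G ⧸ H, ∫ y : H, fg (y * Quotient.out z) ∂m ∂μ₀ := hext fg
    _ = ∫ z : G ⧸ H, ∫ y : H, f (↑(g * y) * Quotient.out z) ∂m ∂μ₀ := by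
        simp only [fg, ContinuousMap.comp_apply, ContinuousMap.coe_mk, Subgroup.coe_mul, mul_assoc]
        rfl
    _ = ∫ x, f x ∂μ₀' :=
        (integral_congr_ae <| .of_forall fun z =>
          integral_mul_left_eq_self (fun y : H => f (y * Quotient.out z)) g).trans
        (hext f.toContinuousMap).symm

theorem IsHaarExtension.eq_of_smulInvariantMeasure [H.Normal] [MeasurableSMul₂ H G]
    [IsProbabilityMeasure m] [m.IsMulRightInvariant] (hext : IsHaarExtension m μ₀ μ₀')
    (ν : Measure G) [IsFiniteMeasure ν] [SMulInvariantMeasure H G ν] (hν : ν.map (↑) = μ₀) :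
    ν = μ₀' := by
  refine ext_of_forall_integral_eq_of_IsFiniteMeasure fun f => ?_
  let F : G ⧸ H → ℝ := fun z => ∫ y : H, f (y * z.out) ∂m
  have hf : Measurable fun p : H × G => f (p.1 * p.2) :=
    f.continuous.measurable.comp (measurable_fst.smul measurable_snd)
  have hF : Measurable F := by
    rw [QuotientGroup.measurable_from_quotient]
    have hFmk : F ∘ (↑) = fun x => ∫ y : H, f (y * x) ∂m :=
      funext fun x => integral_mul_out_mk m f x
    rw [hFmk]
    exact (hf.comp measurable_swap).stronglyMeasurable.integral_prod_right'.measurable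
  have hint : Integrable (Function.uncurry fun (y : H) (x : G) => f (y * x)) (m.prod ν) :=
    .of_bound hf.aestronglyMeasurable ‖f‖ (.of_forall fun p => f.norm_coe_le_norm _)
  have hinv (y : H) : ∫ x, f (y * x) ∂ν = ∫ x, f x ∂ν := integral_smul_eq_self (μ := ν) f (g := y)
  calc ∫ x, f x ∂ν
      = ∫ y : H, ∫ x, f (y * x) ∂ν ∂m := by simp [hinv]
    _ = ∫ x, ∫ y : H, f (y * x) ∂m ∂ν := integral_integral_swap hint
    _ = ∫ x, F x ∂ν := by simp only [F, integral_mul_out_mk]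
    _ = ∫ z, F z ∂μ₀ := by
        rw [← hν, integral_map QuotientGroup.measurable_coe.aemeasurable hF.aestronglyMeasurable]
    _ = ∫ x, f x ∂μ₀' := (hext f.toContinuousMap).symm

end HaarExtension

end MeasureTheory

theorem indep_iff_eq_haarExtension_general {G₁ : Type*} [Group G₁]
    [TopologicalSpace G₁] [IsTopologicalGroup G₁] [CompactSpace G₁]
    [TopologicalSpace.MetrizableSpace G₁] [MeasurableSpace G₁] [BorelSpace G₁]
    (G₂ : Subgroup G₁) [G₂.Normal] (hG₂closed : IsClosed (G₂ : Set G₁))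
    (m : Measure G₂) [m.IsHaarMeasure] [IsProbabilityMeasure m]
    (T₁ : G₁ ≃ₜ G₁)
    (μ₀ : Measure (G₁ ⧸ G₂))
    (μ₀' : Measure G₁) [IsProbabilityMeasure μ₀']
    (hext : ∀ f : C(G₁, ℝ), ∫ x, f x ∂μ₀' =
      ∫ z : G₁ ⧸ G₂, ∫ y : G₂, f ((y : G₁) * Quotient.out z) ∂m ∂μ₀)
    (μ : Measure G₁) (hμ : μ ∈ MInvProj (⇑T₁) (QuotientGroup.mk (s := G₂)) μ₀) :
    (∀ A B : Set (G₂ × G₁),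
      MeasurableSet[MeasurableSpace.comap (fun p : G₂ × G₁ => p.1)
        (inferInstance : MeasurableSpace G₂)] A →
      MeasurableSet[MeasurableSpace.comap (fun p : G₂ × G₁ => (p.1 : G₁) * p.2)
        (inferInstance : MeasurableSpace G₁)] B →
      (m.prod μ) (A ∩ B) = (m.prod μ) A * (m.prod μ) B) ↔ μ = μ₀' := by
  obtain ⟨hμprob, -, hμproj⟩ := hμ
  have : CompactSpace G₂ := isCompact_iff_compactSpace.mp hG₂closed.isCompact
  have := Measure.IsHaarMeasure.isMulRightInvariant_of_isProbabilityMeasure m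
  have hμ₀' : IsHaarExtension m μ₀ μ₀' := hext
  refine (ProbabilityTheory.IndepFun_iff Prod.fst (fun p : G₂ × G₁ => p.1 • p.2) _).symm.trans <|
    (indepFun_fst_smul_iff m μ).trans ⟨fun _ => hμ₀'.eq_of_smulInvariantMeasure μ hμproj, ?_⟩
  rintro rfl
  exact hμ₀'.smulInvariantMeasure

/-- Lemma 3.12: in the group-extension setting, for `μ ∈ M(T₁, μ₀)`, the σ-algebras
`B₁ = π₁⁻¹(ℱ)` and `B_c = π⁻¹(𝔅)` on `G₂ × G₁` (where `π₁(y,x) = y`, `π(y,x) = y·x`)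
are independent with respect to `m × μ` if and only if `μ = μ₀'`, the Haar extension
of `μ₀`. -/
theorem indep_iff_eq_haarExtension {G₁ : Type*} [Group G₁]
    [TopologicalSpace G₁] [IsTopologicalGroup G₁] [CompactSpace G₁]
    [TopologicalSpace.MetrizableSpace G₁] [MeasurableSpace G₁] [BorelSpace G₁]
    (G₂ : Subgroup G₁) [G₂.Normal] (hG₂closed : IsClosed (G₂ : Set G₁))
    (m : Measure G₂) [m.IsHaarMeasure] [IsProbabilityMeasure m]
    (T₁ : G₁ ≃ₜ G₁) (T₂ : G₂ ≃* G₂) (hT₂cont : Continuous T₂)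
    (hcomm : ∀ (y : G₂) (x : G₁), T₁ ((y : G₁) * x) = (T₂ y : G₁) * T₁ x)
    (T₀ : G₁ ⧸ G₂ → G₁ ⧸ G₂)
    (hT₀ : ∀ x : G₁, T₀ (QuotientGroup.mk x) = QuotientGroup.mk (T₁ x))
    (μ₀ : Measure (G₁ ⧸ G₂)) [IsProbabilityMeasure μ₀] (hμ₀ : μ₀.map T₀ = μ₀)
    (μ₀' : Measure G₁) [IsProbabilityMeasure μ₀']
    (hext : ∀ f : C(G₁, ℝ), ∫ x, f x ∂μ₀' =
      ∫ z : G₁ ⧸ G₂, ∫ y : G₂, f ((y : G₁) * Quotient.out z) ∂m ∂μ₀)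
    (μ : Measure G₁) (hμ : μ ∈ MInvProj (⇑T₁) (QuotientGroup.mk (s := G₂)) μ₀) :
    (∀ A B : Set (G₂ × G₁),
      MeasurableSet[MeasurableSpace.comap (fun p : G₂ × G₁ => p.1)
        (inferInstance : MeasurableSpace G₂)] A →
      MeasurableSet[MeasurableSpace.comap (fun p : G₂ × G₁ => (p.1 : G₁) * p.2)
        (inferInstance : MeasurableSpace G₁)] B →
      (m.prod μ) (A ∩ B) = (m.prod μ) A * (m.prod μ) B) ↔ μ = μ₀' :=
  indep_iff_eq_haarExtension_general G₂ hG₂closed m T₁ μ₀ μ₀' hext μ hμ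
end

section
/- Let G be a compact metrizable topological group and T : G → G a surjective continuous group homomorphism. If μ and ν are T-invariant ergodic Borel probability measures on G such that the dynamical systems (G, T, μ) and (G, T, ν) are disjoint, then the convolution μ*ν is ergodic with respect to T. -/
/-!
The product `μ × ν` is `T × T`-ergodic: an invariant probability measure absolutely continuous
with respect to it has, by ergodicity of `μ` and `ν`, marginals `μ` and `ν`, hence is a joining and
by disjointness equals `μ × ν`; so `μ × ν` is an extreme point of the invariant probability measures.
Since `T` is a homomorphism, multiplication intertwines `T × T` with `T`, so the image `μ ∗ ν`
of `μ × ν` under multiplication is ergodic as a factor of an ergodic system.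
-/

open MeasureTheory Measure Function

def DisjointSystems {α β : Type*} [MeasurableSpace α] [MeasurableSpace β]
    (S : α → α) (μ : Measure α) (T : β → β) (ν : Measure β) : Prop :=
  ∀ lam : Measure (α × β), IsProbabilityMeasure lam →
    lam.map (Prod.map S T) = lam → lam.map Prod.fst = μ → lam.map Prod.snd = ν → lam = μ.prod ν

section

variable {α β : Type*} [MeasurableSpace α] [MeasurableSpace β]

theorem Ergodic.map_eq_of_semiconj_of_absolutelyContinuous {S : β → β} {T : α → α} {π : β → α}
    {μ : Measure α} {ρ : Measure β} [IsProbabilityMeasure μ] [IsProbabilityMeasure ρ]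
    (hμ : Ergodic T μ) (hρ : MeasurePreserving S ρ ρ) (hπ : Measurable π) (hπST : Semiconj π S T)
    (hac : ρ.map π ≪ μ) : ρ.map π = μ :=
  have := isProbabilityMeasure_map (μ := ρ) hπ.aemeasurable
  hμ.eq_of_absolutelyContinuous ((hπ.measurePreserving ρ).of_semiconj hρ hπST hμ.measurable) hac

theorem DisjointSystems.eq_prod_of_absolutelyContinuous {S : α → α} {T : β → β}
    {μ : Measure α} {ν : Measure β} [IsProbabilityMeasure μ] [IsProbabilityMeasure ν]
    (hdisj : DisjointSystems S μ T ν) (hμ : Ergodic S μ) (hν : Ergodic T ν)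
    {ρ : Measure (α × β)} [IsProbabilityMeasure ρ] (hρ : MeasurePreserving (Prod.map S T) ρ ρ)
    (hac : ρ ≪ μ.prod ν) : ρ = μ.prod ν := by
  refine hdisj ρ inferInstance hρ.map_eq ?_ ?_
  · refine hμ.map_eq_of_semiconj_of_absolutelyContinuous hρ measurable_fst (fun _ ↦ rfl) ?_
    simpa using hac.map measurable_fst
  · refine hν.map_eq_of_semiconj_of_absolutelyContinuous hρ measurable_snd (fun _ ↦ rfl) ?_
    simpa using hac.map measurable_snd

theorem DisjointSystems.ergodic_prodMap {S : α → α} {T : β → β}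
    {μ : Measure α} {ν : Measure β} [IsProbabilityMeasure μ] [IsProbabilityMeasure ν]
    (hdisj : DisjointSystems S μ T ν) (hμ : Ergodic S μ) (hν : Ergodic T ν) :
    Ergodic (Prod.map S T) (μ.prod ν) := by
  refine Ergodic.of_mem_extremePoints (mem_extremePoints_iff_left.2 ⟨⟨?_, inferInstance⟩, ?_⟩)
  · exact hμ.toMeasurePreserving.prod hν.toMeasurePreserving
  rintro ρ₁ ⟨hρ₁, _⟩ ρ₂ - ⟨a, b, ha, -, -, hsum⟩
  refine hdisj.eq_prod_of_absolutelyContinuous hμ hν hρ₁ ?_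
  exact hsum ▸ (absolutelyContinuous_smul ha.ne').add_right _

end

theorem mconv_ergodic_of_disjoint_general {G : Type*} [Group G] [TopologicalSpace G]
    [IsTopologicalGroup G] [CompactSpace G] [TopologicalSpace.MetrizableSpace G]
    [MeasurableSpace G] [BorelSpace G]
    (T : G → G) (hThom : ∀ x y : G, T (x * y) = T x * T y)
    (μ ν : Measure G) [IsProbabilityMeasure μ] [IsProbabilityMeasure ν]
    (hμerg : Ergodic T μ) (hνerg : Ergodic T ν)
    (hdisj : ∀ lam : Measure (G × G), IsProbabilityMeasure lam →
      lam.map (Prod.map T T) = lam → lam.map Prod.fst = μ → lam.map Prod.snd = ν →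
      lam = μ.prod ν) :
    Ergodic T (μ.mconv ν) :=
  (measurable_mul.measurePreserving (μ.prod ν)).ergodic_of_ergodic_semiconj
    (DisjointSystems.ergodic_prodMap hdisj hμerg hνerg) hμerg.measurable
    fun q ↦ (hThom q.1 q.2).symm

/-- Theorem 4.1: let `T` be a surjective continuous group homomorphism of a compact
metrizable group `G`. If `μ` and `ν` are `T`-invariant ergodic Borel probability measures
such that the systems `(G, T, μ)` and `(G, T, ν)` are disjoint in the sense of Furstenberg
(the only `T×T`-invariant Borel probability measure on `G × G` with marginals `μ` and `ν`
is the product `μ × ν`), then the convolution `μ ∗ ν` is ergodic with respect to `T`. -/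
theorem mconv_ergodic_of_disjoint {G : Type*} [Group G] [TopologicalSpace G]
    [IsTopologicalGroup G] [CompactSpace G] [TopologicalSpace.MetrizableSpace G]
    [MeasurableSpace G] [BorelSpace G]
    (T : G → G) (hTcont : Continuous T) (hThom : ∀ x y : G, T (x * y) = T x * T y)
    (hTsurj : Function.Surjective T)
    (μ ν : Measure G) [IsProbabilityMeasure μ] [IsProbabilityMeasure ν]
    (hμerg : Ergodic T μ) (hνerg : Ergodic T ν)
    (hdisj : ∀ lam : Measure (G × G), IsProbabilityMeasure lam →
      lam.map (Prod.map T T) = lam → lam.map Prod.fst = μ → lam.map Prod.snd = ν →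
      lam = μ.prod ν) :
    Ergodic T (μ.mconv ν) :=
  mconv_ergodic_of_disjoint_general T hThom μ ν hμerg hνerg hdisj
end
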